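/- arXiv:2509.26030 — 5 statements merged into one kernel-verified Lean document; each statement's English description precedes it below -/
import Mathlib

section
/- Fix α, β ∈ (0,1) with α ≠ β and let ε ∈ (0, 1 − 1/K). Set r = min{ α(1−β)/(β(1−α)), β(1−α)/(α(1−β)) } and η* = log((1/ε − 1)(K−1)) / max{γ₁, γ₂}. Then the matrix W* = −η*·∇_W 𝓛(W₀) satisfies: max_{k∈[K]} [f_{W*}(E_k)]_k = 1 − ε, and 1 − min_{k∈[K]} [f_{W*}(E_k)]_k = ε / ( ε + (1−ε)^r ε^{1−r} (K−1)^{r−1} ). -/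
noncomputable section

open Matrix

attribute [local instance] Matrix.normedAddCommGroup Matrix.normedSpace

/-- Softmax probability that query `k` (key embedding = `k`-th column of `Ee`) is mapped
to object `k'` (`k'`-th column of `Et`):
`[f_W(E_k)]_{k'} = exp(Ẽ_{k'}ᵀ W E_k) / ∑_{k''} exp(Ẽ_{k''}ᵀ W E_k)`. -/
def prob {K : ℕ} (Et Ee W : Matrix (Fin K) (Fin K) ℝ) (k' k : Fin K) : ℝ :=
  Real.exp ((Etᵀ * W * Ee) k' k) / ∑ k'' : Fin K, Real.exp ((Etᵀ * W * Ee) k'' k)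

/-- Class frequencies: `p_k = α/L` for the first `L` classes, `p_k = (1-α)/(K-L)` for the rest. -/
def pclass (K L : ℕ) (α : ℝ) (k : Fin K) : ℝ :=
  if (k : ℕ) < L then α / L else (1 - α) / ((K : ℝ) - L)

/-- Population cross-entropy loss `𝓛(W) = -∑_k p_k log [f_W(E_k)]_k`. -/
def ploss {K : ℕ} (L : ℕ) (α : ℝ) (Et Ee W : Matrix (Fin K) (Fin K) ℝ) : ℝ :=
  -∑ k : Fin K, pclass K L α k * Real.log (prob Et Ee W k k)

/-- `G` is the Fréchet gradient of `f` at `W` with respect to the Frobenius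
inner product: `f` is differentiable at `W` with differential `H ↦ trace(Gᵀ H)`. -/
def IsGradientAt {K : ℕ} (f : Matrix (Fin K) (Fin K) ℝ → ℝ)
    (G W : Matrix (Fin K) (Fin K) ℝ) : Prop :=
  ∃ l : Matrix (Fin K) (Fin K) ℝ →L[ℝ] ℝ, HasFDerivAt f l W ∧ ∀ H, l H = (Gᵀ * H).trace

/-- `(U, d, V)` is a singular value decomposition of `G`: `U`, `V` orthogonal,
`d` nonnegative, and `G = U · diagonal d · Vᵀ`. -/
def IsSVD {K : ℕ} (G U : Matrix (Fin K) (Fin K) ℝ) (d : Fin K → ℝ)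
    (V : Matrix (Fin K) (Fin K) ℝ) : Prop :=
  Uᵀ * U = 1 ∧ U * Uᵀ = 1 ∧ Vᵀ * V = 1 ∧ V * Vᵀ = 1 ∧ (∀ i, 0 ≤ d i) ∧
    G = U * Matrix.diagonal d * Vᵀ

/-- `U · norm(Σ) · Vᵀ`, where `norm(Σ)` replaces every nonzero diagonal entry of
`Σ = diagonal d` by `1`. -/
def muonOf {K : ℕ} (U : Matrix (Fin K) (Fin K) ℝ) (d : Fin K → ℝ)
    (V : Matrix (Fin K) (Fin K) ℝ) : Matrix (Fin K) (Fin K) ℝ :=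
  U * Matrix.diagonal (fun i => if d i = 0 then (0 : ℝ) else 1) * Vᵀ

def entryCLM {K : ℕ} (Et Ee : Matrix (Fin K) (Fin K) ℝ) (k' k : Fin K) :
    Matrix (Fin K) (Fin K) ℝ →L[ℝ] ℝ :=
  LinearMap.toContinuousLinearMap
    { toFun := fun W => (Etᵀ * W * Ee) k' k
      map_add' := by intro x y; simp [Matrix.mul_add, Matrix.add_mul]
      map_smul' := by intro c x; simp [Matrix.mul_smul, Matrix.smul_mul] }

@[simp] lemma entryCLM_apply {K : ℕ} (Et Ee : Matrix (Fin K) (Fin K) ℝ) (k' k : Fin K)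
    (W : Matrix (Fin K) (Fin K) ℝ) : entryCLM Et Ee k' k W = (Etᵀ * W * Ee) k' k := rfl

lemma hasFDerivAt_logprob {K : ℕ} (hK : 0 < K) (Et Ee : Matrix (Fin K) (Fin K) ℝ)
    (k : Fin K) :
    HasFDerivAt (fun W => Real.log (prob Et Ee W k k))
      (entryCLM Et Ee k k - (K:ℝ)⁻¹ • ∑ c : Fin K, entryCLM Et Ee c k) 0 := by
  have hne : ∀ W : Matrix (Fin K) (Fin K) ℝ,
      (0:ℝ) < ∑ k'' : Fin K, Real.exp ((Etᵀ * W * Ee) k'' k) := fun W =>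
    Finset.sum_pos (fun i _ => Real.exp_pos _) ⟨k, Finset.mem_univ k⟩
  have hfun : (fun W => Real.log (prob Et Ee W k k))
      = fun W => (Etᵀ * W * Ee) k k
          - Real.log (∑ k'' : Fin K, Real.exp ((Etᵀ * W * Ee) k'' k)) := by
    funext W
    rw [prob, Real.log_div (Real.exp_ne_zero _) (hne W).ne', Real.log_exp]
  rw [hfun]
  have hS : HasFDerivAt
      (fun W => ∑ k'' : Fin K, Real.exp ((Etᵀ * W * Ee) k'' k))
      (∑ c : Fin K, entryCLM Et Ee c k) 0 := by
    have := HasFDerivAt.sum (A := fun (c : Fin K) W => Real.exp ((Etᵀ * W * Ee) c k))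
      (A' := fun c => Real.exp ((Etᵀ * (0:Matrix (Fin K) (Fin K) ℝ) * Ee) c k) • entryCLM Et Ee c k)
      (u := Finset.univ) (x := (0:Matrix (Fin K) (Fin K) ℝ))
      (fun c _ => ((entryCLM Et Ee c k).hasFDerivAt).exp)
    simp [Finset.sum_fn] at this
    exact this
  have hlog := hS.log (by simpa using (hne 0).ne')
  have h1 := ((entryCLM Et Ee k k).hasFDerivAt (x := 0)).sub hlog
  simp only [Matrix.mul_zero, Matrix.zero_mul, Matrix.zero_apply, Real.exp_zero, Finset.sum_const, Finset.card_univ, Fintype.card_fin, nsmul_eq_mul, mul_one] at h1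
  exact h1

lemma hasFDerivAt_ploss {K : ℕ} (hK : 0 < K) (Et Ee : Matrix (Fin K) (Fin K) ℝ)
    (L : ℕ) (α : ℝ) :
    HasFDerivAt (ploss L α Et Ee)
      (-∑ k : Fin K, pclass K L α k •
        (entryCLM Et Ee k k - (K:ℝ)⁻¹ • ∑ c : Fin K, entryCLM Et Ee c k)) 0 := by
  have h := HasFDerivAt.sum (u := (Finset.univ : Finset (Fin K)))
    (x := (0:Matrix (Fin K) (Fin K) ℝ))
    (A := fun (k : Fin K) W => pclass K L α k * Real.log (prob Et Ee W k k))
    (A' := fun k => pclass K L α k •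
        (entryCLM Et Ee k k - (K:ℝ)⁻¹ • ∑ c : Fin K, entryCLM Et Ee c k))
    (fun k _ => (hasFDerivAt_logprob hK Et Ee k).const_mul (pclass K L α k))
  rw [Finset.sum_fn] at h
  exact h.neg

lemma trace_mul_basis {K : ℕ} (M : Matrix (Fin K) (Fin K) ℝ) (k' k : Fin K) :
    (M * single k' k (1:ℝ)).trace = M k k' := by
  simp [Matrix.trace, Matrix.diag, Matrix.mul_apply, Matrix.single, ite_and]

lemma grad_entry {K : ℕ} (hK : 0 < K) (Et Ee : Matrix (Fin K) (Fin K) ℝ)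
    (hEe : Eeᵀ * Ee = 1) (hEt : Etᵀ * Et = 1) (L : ℕ) (α : ℝ)
    (G : Matrix (Fin K) (Fin K) ℝ) (hG : IsGradientAt (ploss L α Et Ee) G 0)
    (k' k : Fin K) :
    (Etᵀ * G * Ee) k' k = pclass K L α k * ((K:ℝ)⁻¹ - if k' = k then 1 else 0) := by
  obtain ⟨l, hl, hlH⟩ := hG
  have hEq := hl.unique (hasFDerivAt_ploss hK Et Ee L α)
  set H : Matrix (Fin K) (Fin K) ℝ := Et * single k' k 1 * Eeᵀ with hH
  have hmat : Etᵀ * H * Ee = single k' k 1 := by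
    rw [hH]
    simp only [Matrix.mul_assoc]
    rw [hEe, Matrix.mul_one, ← Matrix.mul_assoc, hEt, Matrix.one_mul]
  -- trace side
  have htr : l H = (Etᵀ * G * Ee) k' k := by
    rw [hlH H, hH, ← Matrix.mul_assoc, ← Matrix.mul_assoc,
      Matrix.trace_mul_cycle (Gᵀ * Et) (single k' k 1) Eeᵀ]
    rw [← Matrix.mul_assoc, trace_mul_basis]
    have : Eeᵀ * Gᵀ * Et = (Etᵀ * G * Ee)ᵀ := by
      simp [Matrix.transpose_mul, Matrix.mul_assoc]
    rw [this, Matrix.transpose_apply]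
  -- derivative side
  have hder : l H = -(pclass K L α k * ((if k' = k then 1 else 0) - (K:ℝ)⁻¹)) := by
    rw [hEq]
    simp only [ContinuousLinearMap.neg_apply, ContinuousLinearMap.sum_apply,
      ContinuousLinearMap.smul_apply, ContinuousLinearMap.sub_apply, entryCLM_apply,
      hmat, smul_eq_mul]
    have hentry : ∀ a b : Fin K, single k' k (1:ℝ) a b
        = if k' = a ∧ k = b then 1 else 0 := by
      intro a b; simp [Matrix.single]
    simp only [hentry]
    rw [Finset.sum_eq_single k]
    · by_cases h : k' = k <;> simp [h, Finset.sum_ite_eq, eq_comm, ite_and]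
    · intro b _ hbk
      have : ∀ c : Fin K, (if k' = c ∧ k = b then (1:ℝ) else 0) = 0 := by
        intro c; simp [Ne.symm hbk]
      simp [this, Ne.symm hbk]
    · simp
  rw [htr] at hder
  rw [hder]; ring

lemma prob_eq {K : ℕ} (hK : 2 ≤ K) (Et Ee W : Matrix (Fin K) (Fin K) ℝ)
    (η p : ℝ) (k : Fin K)
    (hent : ∀ k' : Fin K, (Etᵀ * W * Ee) k' k
      = η * p * ((if k' = k then 1 else 0) - (K:ℝ)⁻¹)) :
    prob Et Ee W k k = (1 + ((K:ℝ)-1) * Real.exp (-(η * p)))⁻¹ := by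
  have hKpos : (0:ℝ) < K := by positivity
  set a : ℝ := η * p * (1 - (K:ℝ)⁻¹) with ha
  set b : ℝ := η * p * (0 - (K:ℝ)⁻¹) with hb
  have hsum : ∑ k'' : Fin K, Real.exp ((Etᵀ * W * Ee) k'' k)
      = Real.exp a + ((K:ℝ)-1) * Real.exp b := by
    rw [← Finset.add_sum_erase _ _ (Finset.mem_univ k), hent k, if_pos rfl]
    congr 1
    rw [Finset.sum_congr rfl (fun x hx => by
      rw [hent x, if_neg (Finset.ne_of_mem_erase hx)])]
    rw [Finset.sum_const, Finset.card_erase_of_mem (Finset.mem_univ k)]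
    simp only [Finset.card_univ, Fintype.card_fin, nsmul_eq_mul]
    congr 1
    have : (1:ℕ) ≤ K := by omega
    push_cast [Nat.cast_sub this]
    ring
  have hba : b - a = -(η * p) := by rw [ha, hb]; ring
  rw [prob, hsum, hent k, if_pos rfl, ← ha]
  have hfac : Real.exp a + ((K:ℝ)-1) * Real.exp b
      = Real.exp a * (1 + ((K:ℝ)-1) * Real.exp (b - a)) := by
    rw [Real.exp_sub]
    field_simp
  rw [hfac, div_mul_eq_div_div, div_self (Real.exp_ne_zero _), one_div, hba]

/-- One-step gradient descent with the critical step size `η*`: the best-learned class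
reaches probability exactly `1-ε`, while the worst-learned class satisfies the stated identity. -/
theorem stmt0 {K : ℕ} (hK : 2 ≤ K) (Et Ee : Matrix (Fin K) (Fin K) ℝ)
    (hEe : Eeᵀ * Ee = 1) (hEt : Etᵀ * Et = 1)
    (α β : ℝ) (hα : α ∈ Set.Ioo (0:ℝ) 1) (hβ : β ∈ Set.Ioo (0:ℝ) 1) (hαβ : α ≠ β)
    (L : ℕ) (hLβ : (L : ℝ) = β * K) (hL1 : 1 ≤ L) (hLK : L ≤ K - 1)
    (ε : ℝ) (hε : ε ∈ Set.Ioo (0:ℝ) (1 - 1 / K))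
    (γ₁ γ₂ r ηstar : ℝ)
    (hγ₁ : γ₁ = α / L) (hγ₂ : γ₂ = (1 - α) / ((K : ℝ) - L))
    (hr : r = min (α * (1 - β) / (β * (1 - α))) (β * (1 - α) / (α * (1 - β))))
    (hη : ηstar = Real.log ((1 / ε - 1) * ((K : ℝ) - 1)) / max γ₁ γ₂)
    (G : Matrix (Fin K) (Fin K) ℝ) (hG : IsGradientAt (ploss L α Et Ee) G 0)
    (Wstar : Matrix (Fin K) (Fin K) ℝ) (hW : Wstar = -ηstar • G) :
    (Finset.univ.sup' ⟨⟨0, by omega⟩, Finset.mem_univ _⟩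
        (fun k : Fin K => prob Et Ee Wstar k k) = 1 - ε) ∧
    1 - Finset.univ.inf' ⟨⟨0, by omega⟩, Finset.mem_univ _⟩
        (fun k : Fin K => prob Et Ee Wstar k k)
      = ε / (ε + (1 - ε) ^ r * ε ^ (1 - r) * ((K : ℝ) - 1) ^ (r - 1)) := by
  obtain ⟨hα0, hα1⟩ := hα
  obtain ⟨hβ0, hβ1⟩ := hβ
  obtain ⟨hε0, hεK⟩ := hε
  have hKpos : (0:ℝ) < K := by positivity
  have hK0 : (K:ℝ) ≠ 0 := hKpos.ne'
  have hKm1 : (0:ℝ) < (K:ℝ) - 1 := by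
    have : (2:ℝ) ≤ K := by exact_mod_cast hK
    linarith
  have hε1 : ε < 1 := by
    have : 1 / (K:ℝ) > 0 := by positivity
    linarith
  have h1ε : (0:ℝ) < 1 - ε := by linarith
  have hLpos : (0:ℝ) < L := by exact_mod_cast hL1
  have hL0 : (L:ℝ) ≠ 0 := hLpos.ne'
  have hLK' : L + 1 ≤ K := by omega
  have hKL : (0:ℝ) < (K:ℝ) - L := by
    have : (L:ℝ) + 1 ≤ K := by exact_mod_cast hLK'
    linarith
  have hγ₁pos : 0 < γ₁ := by rw [hγ₁]; positivity
  have hγ₂pos : 0 < γ₂ := by rw [hγ₂]; exact div_pos (by linarith) hKL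
  have hmaxpos : 0 < max γ₁ γ₂ := lt_max_of_lt_left hγ₁pos
  have hminpos : 0 < min γ₁ γ₂ := lt_min hγ₁pos hγ₂pos
  set X : ℝ := (1 / ε - 1) * ((K : ℝ) - 1) with hXdef
  have hXval : X = (1 - ε) * ((K:ℝ) - 1) / ε := by
    rw [hXdef]; field_simp
  have hX1 : 1 < X := by
    rw [hXval]
    rw [lt_div_iff₀ hε0, one_mul]
    have hεK' : ε * K < (K:ℝ) - 1 := by
      have h2 : 1 - 1/(K:ℝ) = ((K:ℝ)-1)/K := by field_simp
      rw [h2] at hεK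
      calc ε * K < (((K:ℝ)-1)/K) * K := by
            exact mul_lt_mul_of_pos_right hεK hKpos
        _ = (K:ℝ) - 1 := by field_simp
    nlinarith
  have hX0 : (0:ℝ) < X := by linarith
  have hlogX : 0 < Real.log X := Real.log_pos hX1
  have hη0 : 0 < ηstar := by rw [hη]; exact div_pos hlogX hmaxpos
  -- ratio facts
  have h1α : (0:ℝ) < 1 - α := by linarith
  have h1β : (0:ℝ) < 1 - β := by linarith
  have hKβK : (0:ℝ) < (K:ℝ) - β * K := by nlinarith
  have hγration : γ₁ / γ₂ = α * (1 - β) / (β * (1 - α)) := by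
    rw [hγ₁, hγ₂, hLβ]
    rw [div_div_div_eq]
    rw [div_eq_div_iff (by positivity) (by positivity)]
    ring
  have hγration' : γ₂ / γ₁ = β * (1 - α) / (α * (1 - β)) := by
    rw [hγ₁, hγ₂, hLβ]
    rw [div_div_div_eq]
    rw [div_eq_div_iff (by positivity) (by positivity)]
    ring
  have hrr : r = min γ₁ γ₂ / max γ₁ γ₂ := by
    rw [hr, ← hγration, ← hγration']
    rcases le_total γ₁ γ₂ with h | h
    · rw [min_eq_left h, max_eq_right h, min_eq_left]
      calc γ₁ / γ₂ ≤ 1 := by rw [div_le_one hγ₂pos]; exact h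
        _ ≤ γ₂ / γ₁ := by rw [le_div_iff₀ hγ₁pos]; linarith
    · rw [min_eq_right h, max_eq_left h, min_eq_right]
      calc γ₂ / γ₁ ≤ 1 := by rw [div_le_one hγ₁pos]; exact h
        _ ≤ γ₁ / γ₂ := by rw [le_div_iff₀ hγ₂pos]; linarith
  -- probabilities after one step
  have hWent : ∀ k' k : Fin K, (Etᵀ * Wstar * Ee) k' k
      = ηstar * pclass K L α k * ((if k' = k then 1 else 0) - (K:ℝ)⁻¹) := by
    intro k' k
    have hm : Etᵀ * Wstar * Ee = (-ηstar) • (Etᵀ * G * Ee) := by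
      rw [hW]; rw [Matrix.mul_smul, Matrix.smul_mul]
    rw [hm, Matrix.smul_apply, grad_entry (by omega) Et Ee hEe hEt L α G hG k' k,
      smul_eq_mul]
    ring
  set g : ℝ → ℝ := fun p => (1 + ((K:ℝ)-1) * Real.exp (-(ηstar * p)))⁻¹ with hg
  have hprob : ∀ k : Fin K, prob Et Ee Wstar k k = g (pclass K L α k) := by
    intro k
    exact prob_eq hK Et Ee Wstar ηstar (pclass K L α k) k (fun k' => hWent k' k)
  have hgmono : Monotone g := by
    intro p q hpq
    simp only [hg]
    have hle : Real.exp (-(ηstar * q)) ≤ Real.exp (-(ηstar * p)) := by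
      apply Real.exp_le_exp.2
      have := mul_le_mul_of_nonneg_left hpq hη0.le
      linarith
    have h2 := mul_le_mul_of_nonneg_left hle hKm1.le
    apply inv_anti₀ (by positivity)
    linarith
  have hpc : ∀ k : Fin K, pclass K L α k = if (k:ℕ) < L then γ₁ else γ₂ := by
    intro k; rw [pclass, hγ₁, hγ₂]
  have hne : (Finset.univ : Finset (Fin K)).Nonempty :=
    ⟨⟨0, by omega⟩, Finset.mem_univ _⟩
  have hk₀ : pclass K L α ⟨0, by omega⟩ = γ₁ := by
    rw [hpc]
    norm_num
    omega
  have hk₁ : pclass K L α ⟨K-1, by omega⟩ = γ₂ := by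
    rw [hpc]; simp only []
    rw [if_neg]
    simp only [not_lt]
    omega
  have hsup : Finset.univ.sup' hne (fun k : Fin K => prob Et Ee Wstar k k)
      = g (max γ₁ γ₂) := by
    rw [hgmono.map_max]
    apply le_antisymm
    · apply Finset.sup'_le
      intro k _
      rw [hprob, hpc]
      split
      · exact le_max_left _ _
      · exact le_max_right _ _
    · apply max_le
      · have := Finset.le_sup' (fun k : Fin K => prob Et Ee Wstar k k)
          (Finset.mem_univ (⟨0, by omega⟩ : Fin K))
        rwa [hprob, hk₀] at this
      · have := Finset.le_sup' (fun k : Fin K => prob Et Ee Wstar k k)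
          (Finset.mem_univ (⟨K-1, by omega⟩ : Fin K))
        rwa [hprob, hk₁] at this
  have hinf : Finset.univ.inf' hne (fun k : Fin K => prob Et Ee Wstar k k)
      = g (min γ₁ γ₂) := by
    rw [hgmono.map_min]
    apply le_antisymm
    · apply le_min
      · have := Finset.inf'_le (fun k : Fin K => prob Et Ee Wstar k k)
          (Finset.mem_univ (⟨0, by omega⟩ : Fin K))
        rwa [hprob, hk₀] at this
      · have := Finset.inf'_le (fun k : Fin K => prob Et Ee Wstar k k)
          (Finset.mem_univ (⟨K-1, by omega⟩ : Fin K))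
        rwa [hprob, hk₁] at this
    · apply Finset.le_inf'
      intro k _
      rw [hprob, hpc]
      split
      · exact min_le_left _ _
      · exact min_le_right _ _
  -- value at the max
  have hηmax : ηstar * max γ₁ γ₂ = Real.log X := by
    rw [hη]; field_simp
  have hgmax : g (max γ₁ γ₂) = 1 - ε := by
    simp only [hg]
    rw [hηmax, Real.exp_neg, Real.exp_log hX0]
    have hXne : X ≠ 0 := hX0.ne'
    have hden : 1 + ((K:ℝ)-1) * X⁻¹ = (1-ε)⁻¹ := by
      rw [hXval]
      rw [inv_div]
      field_simp
      ring
    rw [hden, inv_inv]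
  -- value at the min
  have hηmin : ηstar * min γ₁ γ₂ = r * Real.log X := by
    rw [hη, hrr]
    field_simp
  have hXr : Real.exp (-(ηstar * min γ₁ γ₂)) = X ^ (-r) := by
    rw [hηmin, Real.rpow_def_of_pos hX0]
    congr 1
    ring
  set A : ℝ := ((K:ℝ)-1) * X ^ (-r) with hA
  set B : ℝ := (1 - ε) ^ r * ε ^ (1 - r) * ((K:ℝ)-1) ^ (r-1) with hB
  have hA0 : 0 < A := by
    rw [hA]
    exact mul_pos hKm1 (Real.rpow_pos_of_pos hX0 _)
  have hB0 : 0 < B := by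
    rw [hB]
    exact mul_pos (mul_pos (Real.rpow_pos_of_pos h1ε _) (Real.rpow_pos_of_pos hε0 _))
      (Real.rpow_pos_of_pos hKm1 _)
  have hgmin : g (min γ₁ γ₂) = (1 + A)⁻¹ := by
    simp only [hg]
    rw [hXr]
  have hAB : A * B = ε := by
    have hXrval : X ^ (-r) = (1-ε) ^ (-r) * ((K:ℝ)-1) ^ (-r) * ε ^ r := by
      rw [hXval, Real.div_rpow (by positivity) hε0.le,
        Real.mul_rpow h1ε.le hKm1.le, Real.rpow_neg hε0.le, div_inv_eq_mul]
    have e1 : (1-ε) ^ (-r) * (1-ε) ^ r = 1 := by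
      rw [← Real.rpow_add h1ε]
      norm_num
    have e2 : ε ^ r * ε ^ (1-r) = ε := by
      rw [← Real.rpow_add hε0]
      norm_num
    have e3 : ((K:ℝ)-1) * (((K:ℝ)-1) ^ (-r) * ((K:ℝ)-1) ^ (r-1)) = 1 := by
      rw [← Real.rpow_add hKm1]
      rw [show -r + (r-1) = -1 by ring, Real.rpow_neg_one]
      exact mul_inv_cancel₀ hKm1.ne'
    have key : A * B = ((1-ε) ^ (-r) * (1-ε) ^ r) * (ε ^ r * ε ^ (1-r))
        * (((K:ℝ)-1) * (((K:ℝ)-1) ^ (-r) * ((K:ℝ)-1) ^ (r-1))) := by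
      rw [hA, hB, hXrval]; ring
    rw [key, e1, e2, e3]; ring
  constructor
  · show Finset.univ.sup' hne (fun k : Fin K => prob Et Ee Wstar k k) = 1 - ε
    rw [hsup, hgmax]
  · show 1 - Finset.univ.inf' hne (fun k : Fin K => prob Et Ee Wstar k k)
      = ε / (ε + B)
    rw [hinf, hgmin]
    have hd1 : (0:ℝ) < 1 + A := by linarith
    rw [show (1:ℝ) - (1+A)⁻¹ = A/(1+A) by field_simp; ring]
    rw [div_eq_div_iff hd1.ne' (by positivity)]
    linear_combination hAB

end
end

section
/- Let X = Λ + C ∈ ℝ^{K×K}, where Λ = diag(a·𝟙_L, b·𝟙_{K−L}) with a, b > 0 and C is the block-constant matrix with blocks c₁₁J_{L,L}, c₁₂J_{L,K−L}, c₂₁J_{K−L,L}, c₂₂J_{K−L,K−L}. Let R_L ∈ ℝ^{L×(L−1)} and R_{K−L} ∈ ℝ^{(K−L)×(K−L−1)} be matrices whose columns form orthonormal bases of {x ∈ ℝ^L : xᵀ𝟙_L = 0} and {y ∈ ℝ^{K−L} : yᵀ𝟙_{K−L} = 0}, respectively. Let M be the 2×2 matrix with entries M₁₁ = a + Lc₁₁,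 M₁₂ = √(L(K−L))·c₁₂, M₂₁ = √(L(K−L))·c₂₁, M₂₂ = b + (K−L)c₂₂, and let M = Ũ·diag(s₁,s₂)·Ṽᵀ be a singular value decomposition of M with Ũ, Ṽ ∈ ℝ^{2×2} orthogonal and s₁, s₂ ≥ 0. Define e₁ = ((1/√L)𝟙_L ; 0_{K−L}), e₂ = (0_L ; (1/√(K−L))𝟙_{K−L}), v_i = Ṽ_{1i}e₁ + Ṽ_{2i}e₂ and u_i = Ũ_{1i}e₁ + Ũ_{2i}e₂ for i = 1, 2. Then the K×K matrices U = [ (R_L;0_{K−L,L−1}), (0_{L,K−L−1};R_{K−L}), u₁, u₂ ] and V = [ (R_L;0_{K−L,L−1}), (0_{L,K−L−1};R_{K−L}), v₁, v₂ ] are orthogonal, and X = U·Σ·Vᵀ with Σ = diag(a·𝟙_{L−1}, b·𝟙_{K−L−1}, s₁, s₂). -/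
/-! The block-constant vectors form a plane with orthonormal basis `e₁, e₂`. It is invariant
under `X`, which acts on it through `M` in that basis, and it is orthogonal to the zero-sum
vectors supported on either block, on which `X` acts as `a` resp. `b`. Hence the columns of
`U` and `V` are orthonormal, and `X V = U Σ` holds column by column, the last two columns
because `M Ṽ = Ũ diag(s₁, s₂)`. -/

noncomputable section

open Matrix

/-- The `K × K` matrix whose first `L-1` columns are `(R1 ; 0)`, next `K-L-1` columns are
`(0 ; R2)`, and last two columns are the vectors `w1`, `w2`. -/
def colBlocks (K L : ℕ) (hL1 : 1 ≤ L) (hLK : L + 1 ≤ K)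
    (R1 : Matrix (Fin L) (Fin (L - 1)) ℝ) (R2 : Matrix (Fin (K - L)) (Fin (K - L - 1)) ℝ)
    (w1 w2 : Fin K → ℝ) : Matrix (Fin K) (Fin K) ℝ :=
  Matrix.of fun i j =>
    if hj : (j : ℕ) < L - 1 then
      if hi : (i : ℕ) < L then R1 ⟨i, hi⟩ ⟨j, hj⟩ else 0
    else if hj2 : (j : ℕ) < K - 2 then
      if hi : (i : ℕ) < L then 0
      else R2 ⟨(i : ℕ) - L, by have := i.isLt; omega⟩ ⟨(j : ℕ) - (L - 1), by omega⟩
    else if (j : ℕ) = K - 2 then w1 i else w2 i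

theorem Fin.sum_univ_eq_sum_castLE_add {M : Type*} [AddCommMonoid M] {K L : ℕ} (h : L ≤ K)
    (f : Fin K → M) :
    ∑ i, f i = ∑ i : Fin L, f (Fin.castLE h i) + ∑ i : Fin (K - L), f ⟨L + i, by omega⟩ := by
  rw [← (finSumFinEquiv.trans (finCongr (Nat.add_sub_cancel' h))).sum_comp, Fintype.sum_sum_type]
  rfl

namespace BlockVec

variable {K L : ℕ}

def embLo (x : Fin L → ℝ) : Fin K → ℝ := fun i => if h : (i : ℕ) < L then x ⟨i, h⟩ else 0

def embHi (L : ℕ) (y : Fin (K - L) → ℝ) : Fin K → ℝ :=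
  fun i => if h : (i : ℕ) < L then 0 else y ⟨i - L, by omega⟩

def blockConst (L : ℕ) (p q : ℝ) : Fin K → ℝ := fun i => if (i : ℕ) < L then p else q

theorem embLo_dotProduct (h : L ≤ K) (x : Fin L → ℝ) (v : Fin K → ℝ) :
    embLo x ⬝ᵥ v = ∑ k, x k * v (Fin.castLE h k) := by
  simp [dotProduct, Fin.sum_univ_eq_sum_castLE_add h, embLo]

theorem embHi_dotProduct (h : L ≤ K) (y : Fin (K - L) → ℝ) (v : Fin K → ℝ) :
    embHi L y ⬝ᵥ v = ∑ k, y k * v ⟨L + k, by omega⟩ := by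
  simp [dotProduct, Fin.sum_univ_eq_sum_castLE_add h, embHi]

theorem blockConst_dotProduct (h : L ≤ K) (p q : ℝ) (v : Fin K → ℝ) :
    blockConst L p q ⬝ᵥ v
      = p * ∑ k : Fin L, v (Fin.castLE h k) + q * ∑ k : Fin (K - L), v ⟨L + k, by omega⟩ := by
  simp [dotProduct, Fin.sum_univ_eq_sum_castLE_add h, blockConst, Finset.mul_sum]

theorem embLo_dotProduct_embLo (h : L ≤ K) (x x' : Fin L → ℝ) :
    embLo x ⬝ᵥ (embLo x' : Fin K → ℝ) = x ⬝ᵥ x' := by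
  rw [embLo_dotProduct h]
  simp [embLo, dotProduct]

theorem embHi_dotProduct_embHi (h : L ≤ K) (y y' : Fin (K - L) → ℝ) :
    embHi L y ⬝ᵥ embHi L y' = y ⬝ᵥ y' := by
  rw [embHi_dotProduct h]
  simp [embHi, dotProduct]

theorem embLo_dotProduct_embHi (x : Fin L → ℝ) (y : Fin (K - L) → ℝ) :
    embLo x ⬝ᵥ embHi L y = 0 :=
  Finset.sum_eq_zero fun i _ => by unfold embLo embHi; split_ifs <;> simp

theorem embLo_dotProduct_blockConst (h : L ≤ K) (x : Fin L → ℝ) (p q : ℝ) :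
    embLo x ⬝ᵥ (blockConst L p q : Fin K → ℝ) = p * ∑ k, x k := by
  simp [embLo_dotProduct h, blockConst, Finset.mul_sum, mul_comm]

theorem embHi_dotProduct_blockConst (h : L ≤ K) (y : Fin (K - L) → ℝ) (p q : ℝ) :
    embHi L y ⬝ᵥ (blockConst L p q : Fin K → ℝ) = q * ∑ k, y k := by
  simp [embHi_dotProduct h, blockConst, Finset.mul_sum, mul_comm]

theorem blockConst_dotProduct_blockConst (h : L ≤ K) (p q p' q' : ℝ) :
    blockConst L p q ⬝ᵥ (blockConst L p' q' : Fin K → ℝ)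
      = L * (p * p') + (K - L : ℝ) * (q * q') := by
  simp [blockConst_dotProduct h, blockConst, Nat.cast_sub h]
  ring

-- `z 0 • e₁ + z 1 • e₂`
def blockUnit (K L : ℕ) (z : Fin 2 → ℝ) : Fin K → ℝ :=
  blockConst L (z 0 / √(L : ℝ)) (z 1 / √((K : ℝ) - L))

theorem blockUnit_apply (z : Fin 2 → ℝ) (i : Fin K) :
    blockUnit K L z i = z 0 * (if (i : ℕ) < L then (√(L : ℝ))⁻¹ else 0)
      + z 1 * (if (i : ℕ) < L then 0 else (√((K : ℝ) - L))⁻¹) := by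
  unfold blockUnit blockConst
  split_ifs <;> simp [div_eq_mul_inv]

theorem blockUnit_dotProduct_blockUnit (hL : 0 < L) (hLK : L < K) (z z' : Fin 2 → ℝ) :
    blockUnit K L z ⬝ᵥ blockUnit K L z' = z ⬝ᵥ z' := by
  have hL' : (0 : ℝ) < L := by exact_mod_cast hL
  have hKL : (0 : ℝ) < K - L := sub_pos.mpr (by exact_mod_cast hLK)
  rw [blockUnit, blockUnit, blockConst_dotProduct_blockConst hLK.le, dotProduct, Fin.sum_univ_two]
  field_simp
  rw [Real.sq_sqrt hL'.le, Real.sq_sqrt hKL.le]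
  ring

theorem embLo_dotProduct_blockUnit (h : L ≤ K) {x : Fin L → ℝ} (hx : ∑ k, x k = 0)
    (z : Fin 2 → ℝ) : embLo x ⬝ᵥ blockUnit K L z = 0 := by
  rw [blockUnit, embLo_dotProduct_blockConst h, hx, mul_zero]

theorem embHi_dotProduct_blockUnit (h : L ≤ K) {y : Fin (K - L) → ℝ} (hy : ∑ k, y k = 0)
    (z : Fin 2 → ℝ) : embHi L y ⬝ᵥ blockUnit K L z = 0 := by
  rw [blockUnit, embHi_dotProduct_blockConst h, hy, mul_zero]

theorem blockUnit_smul (s : ℝ) (z : Fin 2 → ℝ) : blockUnit K L (s • z) = s • blockUnit K L z := by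
  ext i
  simp only [blockUnit, blockConst, Pi.smul_apply, smul_eq_mul]
  split_ifs <;> ring

-- The matrix `X = Λ + C` of the statement.
def blockModel (K L : ℕ) (a b c₁₁ c₁₂ c₂₁ c₂₂ : ℝ) : Matrix (Fin K) (Fin K) ℝ :=
  diagonal (blockConst L a b)
    + of fun i j => blockConst L (blockConst L c₁₁ c₁₂ j) (blockConst L c₂₁ c₂₂ j) i

variable {a b c₁₁ c₁₂ c₂₁ c₂₂ : ℝ}

theorem blockModel_mulVec (v : Fin K → ℝ) :
    blockModel K L a b c₁₁ c₁₂ c₂₁ c₂₂ *ᵥ v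
      = blockConst L a b * v
        + blockConst L (blockConst L c₁₁ c₁₂ ⬝ᵥ v) (blockConst L c₂₁ c₂₂ ⬝ᵥ v) := by
  rw [blockModel, add_mulVec]
  ext i
  rw [Pi.add_apply, mulVec_diagonal]
  by_cases hi : (i : ℕ) < L <;> simp [blockConst, hi, mulVec, dotProduct]

theorem blockModel_mulVec_embLo (h : L ≤ K) {x : Fin L → ℝ} (hx : ∑ k, x k = 0) :
    blockModel K L a b c₁₁ c₁₂ c₂₁ c₂₂ *ᵥ embLo x = a • embLo x := by
  rw [blockModel_mulVec, dotProduct_comm, embLo_dotProduct_blockConst h, dotProduct_comm,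
    embLo_dotProduct_blockConst h, hx]
  ext i
  simp only [blockConst, embLo, Pi.add_apply, Pi.mul_apply, Pi.smul_apply, smul_eq_mul]
  split_ifs <;> simp

theorem blockModel_mulVec_embHi (h : L ≤ K) {y : Fin (K - L) → ℝ} (hy : ∑ k, y k = 0) :
    blockModel K L a b c₁₁ c₁₂ c₂₁ c₂₂ *ᵥ embHi L y = b • embHi L y := by
  rw [blockModel_mulVec, dotProduct_comm, embHi_dotProduct_blockConst h, dotProduct_comm,
    embHi_dotProduct_blockConst h, hy]
  ext i
  simp only [blockConst, embHi, Pi.add_apply, Pi.mul_apply, Pi.smul_apply, smul_eq_mul]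
  split_ifs <;> simp

theorem blockModel_mulVec_blockUnit (hL : 0 < L) (hLK : L < K) (z : Fin 2 → ℝ) :
    blockModel K L a b c₁₁ c₁₂ c₂₁ c₂₂ *ᵥ blockUnit K L z
      = blockUnit K L (!![a + L * c₁₁, √((L : ℝ) * (K - L)) * c₁₂;
          √((L : ℝ) * (K - L)) * c₂₁, b + (K - L) * c₂₂] *ᵥ z) := by
  have hL' : (0 : ℝ) < L := by exact_mod_cast hL
  have hKL : (0 : ℝ) < K - L := sub_pos.mpr (by exact_mod_cast hLK)
  rw [blockModel_mulVec, blockUnit, blockConst_dotProduct_blockConst hLK.le,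
    blockConst_dotProduct_blockConst hLK.le, blockUnit]
  ext i
  simp only [blockConst, Pi.add_apply, Pi.mul_apply, mulVec, dotProduct, Fin.sum_univ_two,
    of_apply, cons_val', cons_val_zero, cons_val_one, empty_val', cons_val_fin_one]
  rw [Real.sqrt_mul hL'.le]
  split_ifs
  · field_simp
    linear_combination (-(√(L : ℝ) * c₁₂ * z 1)) * Real.mul_self_sqrt hKL.le
  · field_simp
    linear_combination (-(√((K : ℝ) - L) * c₂₁ * z 0)) * Real.mul_self_sqrt hL'.le

end BlockVec

open BlockVec

theorem Matrix.mulVec_transpose_apply_of_eq_mul_diagonal_mul_transpose {n R : Type*}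
    [Fintype n] [DecidableEq n] [CommSemiring R] {M U V : Matrix n n R} {s : n → R}
    (hV : Vᵀ * V = 1) (hM : M = U * diagonal s * Vᵀ) (j : n) :
    M *ᵥ Vᵀ j = s j • Uᵀ j := by
  have hMV : M * V = U * diagonal s := by rw [hM, Matrix.mul_assoc _ Vᵀ, hV, Matrix.mul_one]
  ext i
  have h := congr_fun (congr_fun hMV i) j
  rw [mul_apply', mul_diagonal] at h
  exact h.trans (mul_comm _ _)

theorem Matrix.transpose_mul_self_apply {m n R : Type*} [Fintype m] [Mul R] [AddCommMonoid R]
    (A : Matrix m n R) (j k : n) : (Aᵀ * A) j k = Aᵀ j ⬝ᵥ Aᵀ k :=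
  mul_apply'

section colBlocks

variable {K L : ℕ} (hL1 : 1 ≤ L) (hLK : L + 1 ≤ K)
  {R1 : Matrix (Fin L) (Fin (L - 1)) ℝ} {R2 : Matrix (Fin (K - L)) (Fin (K - L - 1)) ℝ}

theorem colBlocks_transpose_apply (w1 w2 : Fin K → ℝ) (j : Fin K) :
    (colBlocks K L hL1 hLK R1 R2 w1 w2)ᵀ j
      = if h : (j : ℕ) < L - 1 then embLo (R1ᵀ ⟨j, h⟩)
        else if h' : (j : ℕ) < K - 2 then embHi L (R2ᵀ ⟨j - (L - 1), by omega⟩)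
        else if (j : ℕ) = K - 2 then w1 else w2 := by
  ext i
  simp only [colBlocks, transpose_apply, of_apply]
  split_ifs <;> simp [embLo, embHi, *]

theorem colBlocks_blockUnit_transpose_mul_self (hR1o : R1ᵀ * R1 = 1)
    (hR1s : ∀ j, ∑ i, R1 i j = 0) (hR2o : R2ᵀ * R2 = 1) (hR2s : ∀ j, ∑ i, R2 i j = 0)
    {W : Matrix (Fin 2) (Fin 2) ℝ} (hW : Wᵀ * W = 1) :
    (colBlocks K L hL1 hLK R1 R2 (blockUnit K L (Wᵀ 0)) (blockUnit K L (Wᵀ 1)))ᵀ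
      * colBlocks K L hL1 hLK R1 R2 (blockUnit K L (Wᵀ 0)) (blockUnit K L (Wᵀ 1)) = 1 := by
  have hLK' : L ≤ K := by omega
  have hWW (j k : Fin 2) :
      blockUnit K L (Wᵀ j) ⬝ᵥ blockUnit K L (Wᵀ k) = (1 : Matrix _ _ ℝ) j k := by
    rw [blockUnit_dotProduct_blockUnit (by omega) (by omega), ← hW, transpose_mul_self_apply]
  have hLoW (j : Fin (L - 1)) (z : Fin 2 → ℝ) : embLo (R1ᵀ j) ⬝ᵥ blockUnit K L z = 0 :=
    embLo_dotProduct_blockUnit hLK' (hR1s j) z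
  have hHiW (j : Fin (K - L - 1)) (z : Fin 2 → ℝ) : embHi L (R2ᵀ j) ⬝ᵥ blockUnit K L z = 0 :=
    embHi_dotProduct_blockUnit hLK' (hR2s j) z
  ext j k
  rw [transpose_mul_self_apply, colBlocks_transpose_apply, colBlocks_transpose_apply]
  split_ifs <;>
    simp [dotProduct_comm (blockUnit K L _) (embLo _), dotProduct_comm (embHi L _) (embLo _),
      dotProduct_comm (blockUnit K L _) (embHi L _), embLo_dotProduct_embLo hLK',
      embHi_dotProduct_embHi hLK', embLo_dotProduct_embHi, hLoW, hHiW, hWW,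
      ← transpose_mul_self_apply, hR1o, hR2o, one_apply, Fin.ext_iff] <;>
    (try split_ifs) <;> first | rfl | omega

theorem mul_colBlocks {X : Matrix (Fin K) (Fin K) ℝ} {a b s1 s2 : ℝ} {u1 u2 v1 v2 : Fin K → ℝ}
    (hlo : ∀ j, X *ᵥ embLo (R1ᵀ j) = a • embLo (R1ᵀ j))
    (hhi : ∀ j, X *ᵥ embHi L (R2ᵀ j) = b • embHi L (R2ᵀ j))
    (h1 : X *ᵥ v1 = s1 • u1) (h2 : X *ᵥ v2 = s2 • u2) :
    X * colBlocks K L hL1 hLK R1 R2 v1 v2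
      = colBlocks K L hL1 hLK R1 R2 u1 u2 * diagonal fun j : Fin K =>
        if (j : ℕ) < L - 1 then a else if (j : ℕ) < K - 2 then b
        else if (j : ℕ) = K - 2 then s1 else s2 := by
  ext i j
  have hcol : X *ᵥ (colBlocks K L hL1 hLK R1 R2 v1 v2)ᵀ j
      = (if (j : ℕ) < L - 1 then a else if (j : ℕ) < K - 2 then b
          else if (j : ℕ) = K - 2 then s1 else s2) • (colBlocks K L hL1 hLK R1 R2 u1 u2)ᵀ j := by
    rw [colBlocks_transpose_apply, colBlocks_transpose_apply]
    split_ifs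
    exacts [hlo _, hhi _, h1, h2]
  rw [mul_diagonal, mul_comm]
  exact congr_fun hcol i

end colBlocks

theorem stmt8_general (K L : ℕ) (hL1 : 1 ≤ L) (hLK : L + 1 ≤ K)
    (a b : ℝ) (c11 c12 c21 c22 : ℝ)
    (X : Matrix (Fin K) (Fin K) ℝ)
    (hX : X = Matrix.of fun i j : Fin K =>
      (if i = j then (if (i : ℕ) < L then a else b) else 0)
      + (if (i : ℕ) < L then (if (j : ℕ) < L then c11 else c12)
         else (if (j : ℕ) < L then c21 else c22)))
    (R1 : Matrix (Fin L) (Fin (L - 1)) ℝ) (R2 : Matrix (Fin (K - L)) (Fin (K - L - 1)) ℝ)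
    (hR1o : R1ᵀ * R1 = 1) (hR1s : ∀ j, ∑ i, R1 i j = 0)
    (hR2o : R2ᵀ * R2 = 1) (hR2s : ∀ j, ∑ i, R2 i j = 0)
    (M : Matrix (Fin 2) (Fin 2) ℝ)
    (hM : M = !![a + L * c11, Real.sqrt ((L : ℝ) * ((K : ℝ) - L)) * c12;
                 Real.sqrt ((L : ℝ) * ((K : ℝ) - L)) * c21, b + ((K : ℝ) - L) * c22])
    (Ut Vt : Matrix (Fin 2) (Fin 2) ℝ) (s1 s2 : ℝ)
    (hUt : Utᵀ * Ut = 1) (hVt : Vtᵀ * Vt = 1)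
    (hMsvd : M = Ut * Matrix.diagonal ![s1, s2] * Vtᵀ)
    (e1 e2 : Fin K → ℝ)
    (he1 : e1 = fun i : Fin K => if (i : ℕ) < L then (Real.sqrt L)⁻¹ else 0)
    (he2 : e2 = fun i : Fin K => if (i : ℕ) < L then 0 else (Real.sqrt ((K : ℝ) - L))⁻¹)
    (u1 u2 v1 v2 : Fin K → ℝ)
    (hu1 : u1 = fun x => Ut 0 0 * e1 x + Ut 1 0 * e2 x)
    (hu2 : u2 = fun x => Ut 0 1 * e1 x + Ut 1 1 * e2 x)
    (hv1 : v1 = fun x => Vt 0 0 * e1 x + Vt 1 0 * e2 x)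
    (hv2 : v2 = fun x => Vt 0 1 * e1 x + Vt 1 1 * e2 x)
    (U V : Matrix (Fin K) (Fin K) ℝ)
    (hU : U = colBlocks K L hL1 hLK R1 R2 u1 u2)
    (hV : V = colBlocks K L hL1 hLK R1 R2 v1 v2)
    (S : Matrix (Fin K) (Fin K) ℝ)
    (hS : S = Matrix.diagonal fun j : Fin K =>
      if (j : ℕ) < L - 1 then a else if (j : ℕ) < K - 2 then b
      else if (j : ℕ) = K - 2 then s1 else s2) :
    Uᵀ * U = 1 ∧ U * Uᵀ = 1 ∧ Vᵀ * V = 1 ∧ V * Vᵀ = 1 ∧ X = U * S * Vᵀ := by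
  have hLK' : L ≤ K := by omega
  have hunit (W : Matrix (Fin 2) (Fin 2) ℝ) (j : Fin 2) :
      (fun x => W 0 j * e1 x + W 1 j * e2 x) = blockUnit K L (Wᵀ j) := by
    ext i
    rw [blockUnit_apply, he1, he2]
    rfl
  have hXV : X * V = U * S := by
    have hX' : X = blockModel K L a b c11 c12 c21 c22 := hX
    rw [hX', hU, hV, hS, hu1, hu2, hv1, hv2, hunit, hunit, hunit, hunit]
    refine mul_colBlocks hL1 hLK (fun j => blockModel_mulVec_embLo hLK' (hR1s j))
      (fun j => blockModel_mulVec_embHi hLK' (hR2s j)) ?_ ?_ <;>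
    rw [blockModel_mulVec_blockUnit (by omega) (by omega), ← hM,
      mulVec_transpose_apply_of_eq_mul_diagonal_mul_transpose hVt hMsvd, blockUnit_smul] <;> rfl
  have hUU : Uᵀ * U = 1 := by
    rw [hU, hu1, hu2, hunit, hunit]
    exact colBlocks_blockUnit_transpose_mul_self hL1 hLK hR1o hR1s hR2o hR2s hUt
  have hVV : Vᵀ * V = 1 := by
    rw [hV, hv1, hv2, hunit, hunit]
    exact colBlocks_blockUnit_transpose_mul_self hL1 hLK hR1o hR1s hR2o hR2s hVt
  have hVV' : V * Vᵀ = 1 := mul_eq_one_comm.mp hVV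
  refine ⟨hUU, mul_eq_one_comm.mp hUU, hVV, hVV', ?_⟩
  rw [← hXV, Matrix.mul_assoc, hVV', Matrix.mul_one]

/-- SVD of `X = diag(a𝟙_L, b𝟙_{K-L}) + blockConst(c₁₁, c₁₂, c₂₁, c₂₂)`:
the constructed `U` and `V` are orthogonal and `X = U Σ Vᵀ` with
`Σ = diag(a𝟙_{L-1}, b𝟙_{K-L-1}, s₁, s₂)`. -/
theorem stmt8 (K L : ℕ) (hL1 : 1 ≤ L) (hLK : L + 1 ≤ K)
    (a b : ℝ) (ha : 0 < a) (hb : 0 < b) (c11 c12 c21 c22 : ℝ)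
    (X : Matrix (Fin K) (Fin K) ℝ)
    (hX : X = Matrix.of fun i j : Fin K =>
      (if i = j then (if (i : ℕ) < L then a else b) else 0)
      + (if (i : ℕ) < L then (if (j : ℕ) < L then c11 else c12)
         else (if (j : ℕ) < L then c21 else c22)))
    (R1 : Matrix (Fin L) (Fin (L - 1)) ℝ) (R2 : Matrix (Fin (K - L)) (Fin (K - L - 1)) ℝ)
    (hR1o : R1ᵀ * R1 = 1) (hR1s : ∀ j, ∑ i, R1 i j = 0)
    (hR2o : R2ᵀ * R2 = 1) (hR2s : ∀ j, ∑ i, R2 i j = 0)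
    (M : Matrix (Fin 2) (Fin 2) ℝ)
    (hM : M = !![a + L * c11, Real.sqrt ((L : ℝ) * ((K : ℝ) - L)) * c12;
                 Real.sqrt ((L : ℝ) * ((K : ℝ) - L)) * c21, b + ((K : ℝ) - L) * c22])
    (Ut Vt : Matrix (Fin 2) (Fin 2) ℝ) (s1 s2 : ℝ) (hs1 : 0 ≤ s1) (hs2 : 0 ≤ s2)
    (hUt : Utᵀ * Ut = 1) (hUt' : Ut * Utᵀ = 1) (hVt : Vtᵀ * Vt = 1) (hVt' : Vt * Vtᵀ = 1)
    (hMsvd : M = Ut * Matrix.diagonal ![s1, s2] * Vtᵀ)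
    (e1 e2 : Fin K → ℝ)
    (he1 : e1 = fun i : Fin K => if (i : ℕ) < L then (Real.sqrt L)⁻¹ else 0)
    (he2 : e2 = fun i : Fin K => if (i : ℕ) < L then 0 else (Real.sqrt ((K : ℝ) - L))⁻¹)
    (u1 u2 v1 v2 : Fin K → ℝ)
    (hu1 : u1 = fun x => Ut 0 0 * e1 x + Ut 1 0 * e2 x)
    (hu2 : u2 = fun x => Ut 0 1 * e1 x + Ut 1 1 * e2 x)
    (hv1 : v1 = fun x => Vt 0 0 * e1 x + Vt 1 0 * e2 x)
    (hv2 : v2 = fun x => Vt 0 1 * e1 x + Vt 1 1 * e2 x)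
    (U V : Matrix (Fin K) (Fin K) ℝ)
    (hU : U = colBlocks K L hL1 hLK R1 R2 u1 u2)
    (hV : V = colBlocks K L hL1 hLK R1 R2 v1 v2)
    (S : Matrix (Fin K) (Fin K) ℝ)
    (hS : S = Matrix.diagonal fun j : Fin K =>
      if (j : ℕ) < L - 1 then a else if (j : ℕ) < K - 2 then b
      else if (j : ℕ) = K - 2 then s1 else s2) :
    Uᵀ * U = 1 ∧ U * Uᵀ = 1 ∧ Vᵀ * V = 1 ∧ V * Vᵀ = 1 ∧ X = U * S * Vᵀ :=
  stmt8_general K L hL1 hLK a b c11 c12 c21 c22 X hX R1 R2 hR1o hR1s hR2o hR2s M hM Ut Vt s1 s2 hUt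
    hVt hMsvd e1 e2 he1 he2 u1 u2 v1 v2 hu1 hu2 hv1 hv2 U V hU hV S hS
end
end

section
/- Let x = (a·𝟙_L ; b·𝟙_{K−L}) ∈ ℝ^K with a, b > 0, and let X = diag(x) − K^{−1}·𝟙_K·xᵀ ∈ ℝ^{K×K}. Let R_L ∈ ℝ^{L×(L−1)} and R_{K−L} ∈ ℝ^{(K−L)×(K−L−1)} have columns forming orthonormal bases of {y ∈ ℝ^L : yᵀ𝟙_L = 0} and {y ∈ ℝ^{K−L} : yᵀ𝟙_{K−L} = 0}. Define v₁ = (1/√(a²(K−L)+b²L))·( (a√(K−L)/√L)·(𝟙_L;0_{K−L}) − (b√L/√(K−L))·(0_L;𝟙_{K−L}) ), v₂ = (1/√(a²(K−L)+b²L))·( b·(𝟙_L;0_{K−L}) + a·(0_L;𝟙_{K−L}) ), u₁ = (1/√(KL(K−L)))·( (K−L)·(𝟙_L;0_{K−L}) − L·(0_L;𝟙_{K−L}) ), and u₂ = (1/√K)·𝟙_K. Then U = [ (R_L;0_{K−L,L−1}), (0_{L,K−L−1};R_{K−L}), u₁, u₂ ] and V = [ (R_L;0_{K−L,L−1}), (0_{L,K−L−1};R_{K−L}),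 v₁, v₂ ] are orthogonal K×K matrices and X = U·Σ·Vᵀ with Σ = diag( a·𝟙_{L−1}, b·𝟙_{K−L−1}, √((a²(K−L)+b²L)/K), 0 ). -/
set_option maxHeartbeats 2000000


noncomputable section

open Matrix Finset

/-- Two-region split of a sum over `Fin K`. -/
lemma split2 {M : Type*} [AddCommMonoid M] (K L : ℕ) (hLK : L ≤ K) (f : Fin K → M) :
    ∑ i, f i = (∑ i : Fin L, f ⟨i, by omega⟩) +
      ∑ i : Fin (K - L), f ⟨L + (i : ℕ), by omega⟩ := by
  classical
  set g : ℕ → M := fun j => if h : j < K then f ⟨j, h⟩ else 0 with hg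
  have hfg : ∀ i : Fin K, f i = g i := by
    intro i; simp [hg, i.isLt]
  have h1 : ∑ i, f i = ∑ j ∈ range K, g j := by
    rw [Finset.sum_congr rfl (fun i _ => hfg i)]
    exact Fin.sum_univ_eq_sum_range g K
  have h2 : (∑ i : Fin L, f ⟨i, by omega⟩) = ∑ j ∈ range L, g j := by
    rw [Finset.sum_congr rfl (fun (i : Fin L) _ => by
      show f _ = g i; simp [hg, show (i:ℕ) < K by omega])]
    exact Fin.sum_univ_eq_sum_range g L
  have h3 : (∑ i : Fin (K - L), f ⟨L + (i : ℕ), by omega⟩)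
      = ∑ j ∈ range (K - L), g (L + j) := by
    rw [Finset.sum_congr rfl (fun (i : Fin (K - L)) _ => by
      show f _ = g (L + i); simp [hg, show L + (i:ℕ) < K by omega])]
    exact Fin.sum_univ_eq_sum_range (fun j => g (L + j)) (K - L)
  rw [h1, h2, h3, Finset.range_eq_Ico, ← Finset.sum_Ico_consecutive g (Nat.zero_le L) hLK,
    Finset.sum_Ico_eq_sum_range, Finset.sum_Ico_eq_sum_range]
  simp

/-- Four-region split of a sum over `Fin K`. -/
lemma split4 {M : Type*} [AddCommMonoid M] (K L : ℕ) (hL1 : 1 ≤ L) (hLK : L + 1 ≤ K)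
    (f : Fin K → M) :
    ∑ j, f j = ((∑ j : Fin (L - 1), f ⟨j, by omega⟩) +
      ∑ j : Fin (K - L - 1), f ⟨L - 1 + (j : ℕ), by omega⟩) +
      f ⟨K - 2, by omega⟩ + f ⟨K - 1, by omega⟩ := by
  classical
  set g : ℕ → M := fun j => if h : j < K then f ⟨j, h⟩ else 0 with hg
  have h1 : ∑ i, f i = ∑ j ∈ range K, g j := by
    rw [Finset.sum_congr rfl (fun (i : Fin K) _ => by
      show f i = g i; simp [hg, i.isLt])]
    exact Fin.sum_univ_eq_sum_range g K
  have h2 : (∑ j : Fin (L - 1), f ⟨j, by omega⟩) = ∑ j ∈ range (L - 1), g j := by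
    rw [Finset.sum_congr rfl (fun (i : Fin (L - 1)) _ => by
      show f _ = g i; simp [hg, show (i:ℕ) < K by omega])]
    exact Fin.sum_univ_eq_sum_range g (L - 1)
  have h3 : (∑ j : Fin (K - L - 1), f ⟨L - 1 + (j : ℕ), by omega⟩)
      = ∑ j ∈ range (K - L - 1), g (L - 1 + j) := by
    rw [Finset.sum_congr rfl (fun (i : Fin (K - L - 1)) _ => by
      show f _ = g (L - 1 + i); simp [hg, show L - 1 + (i:ℕ) < K by omega])]
    exact Fin.sum_univ_eq_sum_range (fun j => g (L - 1 + j)) (K - L - 1)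
  have h4 : f ⟨K - 2, by omega⟩ = g (K - 2) := by simp [hg, show K - 2 < K by omega]
  have h5 : f ⟨K - 1, by omega⟩ = g (K - 1) := by simp [hg, show K - 1 < K by omega]
  rw [h1, h2, h3, h4, h5]
  rw [show K = (K - 2) + 1 + 1 by omega, Finset.sum_range_succ, Finset.sum_range_succ]
  rw [show K - 2 + 1 + 1 - 2 = K - 2 by omega, show K - 2 + 1 + 1 - 1 = K - 2 + 1 by omega,
    show K - 2 + 1 + 1 - L - 1 = K - L - 1 by omega]
  congr 1
  congr 1
  rw [Finset.range_eq_Ico,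
    ← Finset.sum_Ico_consecutive g (Nat.zero_le (L - 1)) (by omega : L - 1 ≤ K - 2),
    Finset.sum_Ico_eq_sum_range, Finset.sum_Ico_eq_sum_range]
  simp [show K - 2 - (L - 1) = K - L - 1 by omega]

/-- Row gram of a matrix whose columns complete `𝟙/√n` to an orthonormal basis. -/
lemma gram_rows {n : ℕ} (hn : 1 ≤ n) (R : Matrix (Fin n) (Fin (n - 1)) ℝ)
    (ho : Rᵀ * R = 1) (hs : ∀ j, ∑ i, R i j = 0) (i k : Fin n) :
    ∑ j, R i j * R k j = (if i = k then 1 else 0) - (n : ℝ)⁻¹ := by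
  obtain ⟨m, rfl⟩ : ∃ m, n = m + 1 := ⟨n - 1, by omega⟩
  set R' : Matrix (Fin (m + 1)) (Fin m) ℝ := R with hR'
  set Q : Matrix (Fin (m + 1)) (Fin (m + 1)) ℝ :=
    Matrix.of (fun i j => if h : (j : ℕ) < m then R' i ⟨j, h⟩
      else (Real.sqrt (m + 1))⁻¹) with hQ
  have hsq : Real.sqrt ((m : ℝ) + 1) * Real.sqrt ((m : ℝ) + 1) = (m : ℝ) + 1 :=
    Real.mul_self_sqrt (by positivity)
  have hmpos : (0 : ℝ) < (m : ℝ) + 1 := by positivity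
  have hRo : ∀ p q, ∑ i, R' i p * R' i q = if p = q then (1:ℝ) else 0 := by
    intro p q
    have := congrFun (congrFun ho p) q
    simpa [Matrix.mul_apply, Matrix.one_apply] using this
  have hQo : Qᵀ * Q = 1 := by
    ext j k
    rw [Matrix.mul_apply, Matrix.one_apply]
    simp only [hQ, Matrix.transpose_apply, Matrix.of_apply]
    by_cases hj : (j : ℕ) < m <;> by_cases hk : (k : ℕ) < m
    · rw [Finset.sum_congr rfl (fun i _ => by rw [dif_pos hj, dif_pos hk])]
      rw [hRo ⟨j, hj⟩ ⟨k, hk⟩]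
      congr 1
      simp [Fin.ext_iff]
    · rw [Finset.sum_congr rfl (fun i _ => by rw [dif_pos hj, dif_neg hk])]
      rw [← Finset.sum_mul, hs ⟨j, hj⟩, zero_mul, if_neg (by omega : ¬ j = k)]
    · rw [Finset.sum_congr rfl (fun i _ => by rw [dif_neg hj, dif_pos hk])]
      rw [← Finset.mul_sum, hs ⟨k, hk⟩, mul_zero, if_neg (by omega : ¬ j = k)]
    · rw [Finset.sum_congr rfl (fun i _ => by rw [dif_neg hj, dif_neg hk])]
      rw [Finset.sum_const, if_pos (by have := j.isLt; have := k.isLt; omega : j = k)]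
      simp only [Finset.card_univ, Fintype.card_fin, nsmul_eq_mul]
      have hinv : ((Real.sqrt ((m:ℝ) + 1))⁻¹ * (Real.sqrt ((m:ℝ) + 1))⁻¹ : ℝ)
          = ((m : ℝ) + 1)⁻¹ := by rw [← mul_inv, hsq]
      push_cast
      rw [hinv]
      field_simp
  have hQo' : Q * Qᵀ = 1 := mul_eq_one_comm.mp hQo
  have key : ∑ j, Q i j * Q k j = if i = k then (1:ℝ) else 0 := by
    have := congrFun (congrFun hQo' i) k
    simpa [Matrix.mul_apply, Matrix.one_apply] using this
  rw [Fin.sum_univ_castSucc] at key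
  have e1 : ∀ (p : Fin (m+1)) (j : Fin m), Q p j.castSucc = R' p j := by
    intro p j
    simp [hQ, j.isLt]
  have e2 : ∀ p : Fin (m+1), Q p (Fin.last m) = (Real.sqrt (m + 1))⁻¹ := by
    intro p; simp [hQ]
  rw [Finset.sum_congr rfl (fun j _ => by rw [e1 i j, e1 k j]), e2, e2] at key
  have : ((Real.sqrt (m + 1))⁻¹ * (Real.sqrt (m + 1))⁻¹ : ℝ) = ((m : ℝ) + 1)⁻¹ := by
    rw [← mul_inv]
    push_cast
    rw [hsq]
  rw [this] at key
  have : ((m + 1 : ℕ) : ℝ)⁻¹ = ((m : ℝ) + 1)⁻¹ := by push_cast; ring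
  show ∑ j : Fin m, R' i j * R' k j = (if i = k then (1:ℝ) else 0) - ((m + 1 : ℕ) : ℝ)⁻¹
  rw [this]
  linarith [key]


section Entry
variable {K L : ℕ} {hL1 : 1 ≤ L} {hLK : L + 1 ≤ K}
  {R1 : Matrix (Fin L) (Fin (L - 1)) ℝ} {R2 : Matrix (Fin (K - L)) (Fin (K - L - 1)) ℝ}
  {w1 w2 : Fin K → ℝ}

lemma cbA {i j : Fin K} (hj : (j : ℕ) < L - 1) (hi : (i : ℕ) < L) :
    colBlocks K L hL1 hLK R1 R2 w1 w2 i j = R1 ⟨i, hi⟩ ⟨j, hj⟩ := by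
  simp [colBlocks, hj, hi]

lemma cbA' {i j : Fin K} (hj : (j : ℕ) < L - 1) (hi : ¬ (i : ℕ) < L) :
    colBlocks K L hL1 hLK R1 R2 w1 w2 i j = 0 := by
  simp [colBlocks, hj, hi]

lemma cbB {i j : Fin K} (hj : ¬ (j : ℕ) < L - 1) (hj2 : (j : ℕ) < K - 2)
    (hi : (i : ℕ) < L) :
    colBlocks K L hL1 hLK R1 R2 w1 w2 i j = 0 := by
  simp [colBlocks, hj, hj2, hi]

lemma cbB' {i j : Fin K} (hj : ¬ (j : ℕ) < L - 1) (hj2 : (j : ℕ) < K - 2)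
    (hi : ¬ (i : ℕ) < L) :
    colBlocks K L hL1 hLK R1 R2 w1 w2 i j
      = R2 ⟨(i : ℕ) - L, by have := i.isLt; omega⟩ ⟨(j : ℕ) - (L - 1), by omega⟩ := by
  simp [colBlocks, hj, hj2, hi]

lemma cbC {i j : Fin K} (hj : (j : ℕ) = K - 2) :
    colBlocks K L hL1 hLK R1 R2 w1 w2 i j = w1 i := by
  have h1 : ¬ (j : ℕ) < L - 1 := by omega
  have h2 : ¬ (j : ℕ) < K - 2 := by omega
  simp only [colBlocks, Matrix.of_apply]
  rw [dif_neg h1, dif_neg h2, if_pos hj]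

lemma cbD {i j : Fin K} (hj : (j : ℕ) = K - 1) :
    colBlocks K L hL1 hLK R1 R2 w1 w2 i j = w2 i := by
  have h1 : ¬ (j : ℕ) < L - 1 := by omega
  have h2 : ¬ (j : ℕ) < K - 2 := by omega
  have h3 : ¬ (j : ℕ) = K - 2 := by omega
  simp only [colBlocks, Matrix.of_apply]
  rw [dif_neg h1, dif_neg h2, if_neg h3]

end Entry

set_option maxHeartbeats 2000000 in
lemma colBlocks_orth (K L : ℕ) (hL1 : 1 ≤ L) (hLK : L + 1 ≤ K)
    (R1 : Matrix (Fin L) (Fin (L - 1)) ℝ) (R2 : Matrix (Fin (K - L)) (Fin (K - L - 1)) ℝ)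
    (hR1o : R1ᵀ * R1 = 1) (hR1s : ∀ j, ∑ i, R1 i j = 0)
    (hR2o : R2ᵀ * R2 = 1) (hR2s : ∀ j, ∑ i, R2 i j = 0)
    (c1 d1 c2 d2 : ℝ) (w1 w2 : Fin K → ℝ)
    (hw1 : ∀ i : Fin K, w1 i = if (i : ℕ) < L then c1 else d1)
    (hw2 : ∀ i : Fin K, w2 i = if (i : ℕ) < L then c2 else d2)
    (h11 : (L : ℝ) * (c1 * c1) + ((K - L : ℕ) : ℝ) * (d1 * d1) = 1)
    (h22 : (L : ℝ) * (c2 * c2) + ((K - L : ℕ) : ℝ) * (d2 * d2) = 1)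
    (h12 : (L : ℝ) * (c1 * c2) + ((K - L : ℕ) : ℝ) * (d1 * d2) = 0) :
    (colBlocks K L hL1 hLK R1 R2 w1 w2)ᵀ * colBlocks K L hL1 hLK R1 R2 w1 w2 = 1 := by
  classical
  set C := colBlocks K L hL1 hLK R1 R2 w1 w2 with hC
  have hR1 : ∀ p q, ∑ i, R1 i p * R1 i q = if p = q then (1:ℝ) else 0 := fun p q => by
    have := congrFun (congrFun hR1o p) q
    simpa [Matrix.mul_apply, Matrix.one_apply] using this
  have hR2 : ∀ p q, ∑ i, R2 i p * R2 i q = if p = q then (1:ℝ) else 0 := fun p q => by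
    have := congrFun (congrFun hR2o p) q
    simpa [Matrix.mul_apply, Matrix.one_apply] using this
  have w1lo : ∀ p : Fin K, (p : ℕ) < L → w1 p = c1 := fun p hp => by rw [hw1 p, if_pos hp]
  have w1hi : ∀ p : Fin K, ¬ (p : ℕ) < L → w1 p = d1 := fun p hp => by rw [hw1 p, if_neg hp]
  have w2lo : ∀ p : Fin K, (p : ℕ) < L → w2 p = c2 := fun p hp => by rw [hw2 p, if_pos hp]
  have w2hi : ∀ p : Fin K, ¬ (p : ℕ) < L → w2 p = d2 := fun p hp => by rw [hw2 p, if_neg hp]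
  have eA : ∀ (i j : Fin K) (hj : (j : ℕ) < L - 1) (hi : (i : ℕ) < L),
      C i j = R1 ⟨i, hi⟩ ⟨j, hj⟩ := fun i j hj hi => cbA hj hi
  have eA' : ∀ (i j : Fin K) (hj : (j : ℕ) < L - 1) (hi : ¬ (i : ℕ) < L),
      C i j = 0 := fun i j hj hi => cbA' hj hi
  have eB : ∀ (i j : Fin K) (hj : ¬ (j : ℕ) < L - 1) (hj2 : (j : ℕ) < K - 2)
      (hi : (i : ℕ) < L), C i j = 0 := fun i j hj hj2 hi => cbB hj hj2 hi
  have eB' : ∀ (i j : Fin K) (hj : ¬ (j : ℕ) < L - 1) (hj2 : (j : ℕ) < K - 2)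
      (hi : ¬ (i : ℕ) < L), C i j
        = R2 ⟨(i : ℕ) - L, by have := i.isLt; omega⟩ ⟨(j : ℕ) - (L - 1), by omega⟩ :=
    fun i j hj hj2 hi => cbB' hj hj2 hi
  have eC : ∀ (i j : Fin K) (hj : (j : ℕ) = K - 2), C i j = w1 i := fun i j hj => cbC hj
  have eD : ∀ (i j : Fin K) (hj : (j : ℕ) = K - 1), C i j = w2 i := fun i j hj => cbD hj
  ext j k
  rw [Matrix.mul_apply, Matrix.one_apply]
  simp only [Matrix.transpose_apply]
  rw [split2 K L (by omega) (fun i => C i j * C i k)]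
  have hlow : ∀ i : Fin L, ((⟨(i : ℕ), by omega⟩ : Fin K) : ℕ) < L := fun i => i.isLt
  have hhigh : ∀ i : Fin (K - L), ¬ ((⟨L + (i : ℕ), by have := i.isLt; omega⟩ : Fin K) : ℕ) < L :=
    fun i => by simp
  have idx : ∀ (i : Fin (K - L)) (h : L + (i:ℕ) - L < K - L),
      (⟨L + (i:ℕ) - L, h⟩ : Fin (K - L)) = i := fun i h => Fin.ext (by show L + (i:ℕ) - L = (i:ℕ); omega)
  have hj4 : (j:ℕ) < L - 1 ∨ (¬ (j:ℕ) < L - 1 ∧ (j:ℕ) < K - 2) ∨ (j:ℕ) = K - 2 ∨ (j:ℕ) = K - 1 := by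
    have := j.isLt; omega
  have hk4 : (k:ℕ) < L - 1 ∨ (¬ (k:ℕ) < L - 1 ∧ (k:ℕ) < K - 2) ∨ (k:ℕ) = K - 2 ∨ (k:ℕ) = K - 1 := by
    have := k.isLt; omega
  rcases hj4 with hj | ⟨hj1, hj2⟩ | hj | hj
  · rcases hk4 with hk | ⟨hk1, hk2⟩ | hk | hk
    · -- A A
      have e1 : (∑ i : Fin L, C ⟨(i:ℕ), by omega⟩ j * C ⟨(i:ℕ), by omega⟩ k)
          = ∑ i : Fin L, R1 i ⟨(j:ℕ), hj⟩ * R1 i ⟨(k:ℕ), hk⟩ :=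
        Finset.sum_congr rfl fun i _ => by
          rw [eA _ _ hj (hlow i), eA _ _ hk (hlow i)]
      have e2 : (∑ i : Fin (K - L), C ⟨L + (i:ℕ), by have := i.isLt; omega⟩ j *
          C ⟨L + (i:ℕ), by have := i.isLt; omega⟩ k) = 0 :=
        Finset.sum_eq_zero fun i _ => by rw [eA' _ _ hj (hhigh i), zero_mul]
      rw [e1, e2, add_zero, hR1]
      by_cases hjk : j = k
      · subst hjk; simp
      · rw [if_neg hjk, if_neg (by intro h; apply hjk; exact Fin.ext (by
          have := congrArg Fin.val h; simpa using this))]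
    · -- A B
      have e1 : (∑ i : Fin L, C ⟨(i:ℕ), by omega⟩ j * C ⟨(i:ℕ), by omega⟩ k) = 0 :=
        Finset.sum_eq_zero fun i _ => by rw [eB _ _ hk1 hk2 (hlow i), mul_zero]
      have e2 : (∑ i : Fin (K - L), C ⟨L + (i:ℕ), by have := i.isLt; omega⟩ j *
          C ⟨L + (i:ℕ), by have := i.isLt; omega⟩ k) = 0 :=
        Finset.sum_eq_zero fun i _ => by rw [eA' _ _ hj (hhigh i), zero_mul]
      rw [e1, e2, add_zero, if_neg (by intro h; subst h; omega)]
    · -- A C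
      have e1 : (∑ i : Fin L, C ⟨(i:ℕ), by omega⟩ j * C ⟨(i:ℕ), by omega⟩ k)
          = ∑ i : Fin L, R1 i ⟨(j:ℕ), hj⟩ * c1 :=
        Finset.sum_congr rfl fun i _ => by
          rw [eA _ _ hj (hlow i), eC _ _ hk, w1lo _ (hlow i)]
      have e2 : (∑ i : Fin (K - L), C ⟨L + (i:ℕ), by have := i.isLt; omega⟩ j *
          C ⟨L + (i:ℕ), by have := i.isLt; omega⟩ k) = 0 :=
        Finset.sum_eq_zero fun i _ => by rw [eA' _ _ hj (hhigh i), zero_mul]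
      rw [e1, e2, add_zero, ← Finset.sum_mul, hR1s, zero_mul,
        if_neg (by intro h; subst h; omega)]
    · -- A D
      have e1 : (∑ i : Fin L, C ⟨(i:ℕ), by omega⟩ j * C ⟨(i:ℕ), by omega⟩ k)
          = ∑ i : Fin L, R1 i ⟨(j:ℕ), hj⟩ * c2 :=
        Finset.sum_congr rfl fun i _ => by
          rw [eA _ _ hj (hlow i), eD _ _ hk, w2lo _ (hlow i)]
      have e2 : (∑ i : Fin (K - L), C ⟨L + (i:ℕ), by have := i.isLt; omega⟩ j *
          C ⟨L + (i:ℕ), by have := i.isLt; omega⟩ k) = 0 :=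
        Finset.sum_eq_zero fun i _ => by rw [eA' _ _ hj (hhigh i), zero_mul]
      rw [e1, e2, add_zero, ← Finset.sum_mul, hR1s, zero_mul,
        if_neg (by intro h; subst h; omega)]
  · rcases hk4 with hk | ⟨hk1, hk2⟩ | hk | hk
    · -- B A
      have e1 : (∑ i : Fin L, C ⟨(i:ℕ), by omega⟩ j * C ⟨(i:ℕ), by omega⟩ k) = 0 :=
        Finset.sum_eq_zero fun i _ => by rw [eB _ _ hj1 hj2 (hlow i), zero_mul]
      have e2 : (∑ i : Fin (K - L), C ⟨L + (i:ℕ), by have := i.isLt; omega⟩ j *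
          C ⟨L + (i:ℕ), by have := i.isLt; omega⟩ k) = 0 :=
        Finset.sum_eq_zero fun i _ => by rw [eA' _ _ hk (hhigh i), mul_zero]
      rw [e1, e2, add_zero, if_neg (by intro h; subst h; omega)]
    · -- B B
      have e1 : (∑ i : Fin L, C ⟨(i:ℕ), by omega⟩ j * C ⟨(i:ℕ), by omega⟩ k) = 0 :=
        Finset.sum_eq_zero fun i _ => by rw [eB _ _ hj1 hj2 (hlow i), zero_mul]
      have e2 : (∑ i : Fin (K - L), C ⟨L + (i:ℕ), by have := i.isLt; omega⟩ j *
          C ⟨L + (i:ℕ), by have := i.isLt; omega⟩ k)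
          = ∑ i : Fin (K - L), R2 i ⟨(j:ℕ) - (L - 1), by omega⟩ *
              R2 i ⟨(k:ℕ) - (L - 1), by omega⟩ :=
        Finset.sum_congr rfl fun i _ => by
          rw [eB' _ _ hj1 hj2 (hhigh i), eB' _ _ hk1 hk2 (hhigh i)]
          rw [idx]
      rw [e1, e2, zero_add, hR2]
      by_cases hjk : j = k
      · subst hjk; simp
      · have hne : ¬ ((⟨(j:ℕ) - (L - 1), by omega⟩ : Fin (K - L - 1))
            = ⟨(k:ℕ) - (L - 1), by omega⟩) := by
          intro h
          apply hjk
          have hv := congrArg Fin.val h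
          simp only [] at hv
          exact Fin.ext (by omega)
        rw [if_neg hne, if_neg hjk]
    · -- B C
      have e1 : (∑ i : Fin L, C ⟨(i:ℕ), by omega⟩ j * C ⟨(i:ℕ), by omega⟩ k) = 0 :=
        Finset.sum_eq_zero fun i _ => by rw [eB _ _ hj1 hj2 (hlow i), zero_mul]
      have e2 : (∑ i : Fin (K - L), C ⟨L + (i:ℕ), by have := i.isLt; omega⟩ j *
          C ⟨L + (i:ℕ), by have := i.isLt; omega⟩ k)
          = ∑ i : Fin (K - L), R2 i ⟨(j:ℕ) - (L - 1), by omega⟩ * d1 :=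
        Finset.sum_congr rfl fun i _ => by
          rw [eB' _ _ hj1 hj2 (hhigh i), eC _ _ hk, w1hi _ (hhigh i)]
          rw [idx]
      rw [e1, e2, zero_add, ← Finset.sum_mul, hR2s, zero_mul,
        if_neg (by intro h; subst h; omega)]
    · -- B D
      have e1 : (∑ i : Fin L, C ⟨(i:ℕ), by omega⟩ j * C ⟨(i:ℕ), by omega⟩ k) = 0 :=
        Finset.sum_eq_zero fun i _ => by rw [eB _ _ hj1 hj2 (hlow i), zero_mul]
      have e2 : (∑ i : Fin (K - L), C ⟨L + (i:ℕ), by have := i.isLt; omega⟩ j *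
          C ⟨L + (i:ℕ), by have := i.isLt; omega⟩ k)
          = ∑ i : Fin (K - L), R2 i ⟨(j:ℕ) - (L - 1), by omega⟩ * d2 :=
        Finset.sum_congr rfl fun i _ => by
          rw [eB' _ _ hj1 hj2 (hhigh i), eD _ _ hk, w2hi _ (hhigh i)]
          rw [idx]
      rw [e1, e2, zero_add, ← Finset.sum_mul, hR2s, zero_mul,
        if_neg (by intro h; subst h; omega)]
  · rcases hk4 with hk | ⟨hk1, hk2⟩ | hk | hk
    · -- C A
      have e1 : (∑ i : Fin L, C ⟨(i:ℕ), by omega⟩ j * C ⟨(i:ℕ), by omega⟩ k)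
          = ∑ i : Fin L, c1 * R1 i ⟨(k:ℕ), hk⟩ :=
        Finset.sum_congr rfl fun i _ => by
          rw [eC _ _ hj, w1lo _ (hlow i), eA _ _ hk (hlow i)]
      have e2 : (∑ i : Fin (K - L), C ⟨L + (i:ℕ), by have := i.isLt; omega⟩ j *
          C ⟨L + (i:ℕ), by have := i.isLt; omega⟩ k) = 0 :=
        Finset.sum_eq_zero fun i _ => by rw [eA' _ _ hk (hhigh i), mul_zero]
      rw [e1, e2, add_zero, ← Finset.mul_sum, hR1s, mul_zero,
        if_neg (by intro h; subst h; omega)]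
    · -- C B
      have e1 : (∑ i : Fin L, C ⟨(i:ℕ), by omega⟩ j * C ⟨(i:ℕ), by omega⟩ k) = 0 :=
        Finset.sum_eq_zero fun i _ => by rw [eB _ _ hk1 hk2 (hlow i), mul_zero]
      have e2 : (∑ i : Fin (K - L), C ⟨L + (i:ℕ), by have := i.isLt; omega⟩ j *
          C ⟨L + (i:ℕ), by have := i.isLt; omega⟩ k)
          = ∑ i : Fin (K - L), d1 * R2 i ⟨(k:ℕ) - (L - 1), by omega⟩ :=
        Finset.sum_congr rfl fun i _ => by
          rw [eC _ _ hj, w1hi _ (hhigh i), eB' _ _ hk1 hk2 (hhigh i)]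
          rw [idx]
      rw [e1, e2, zero_add, ← Finset.mul_sum, hR2s, mul_zero,
        if_neg (by intro h; subst h; omega)]
    · -- C C
      have heq : j = k := Fin.ext (by omega)
      have e1 : (∑ i : Fin L, C ⟨(i:ℕ), by omega⟩ j * C ⟨(i:ℕ), by omega⟩ k)
          = ∑ _i : Fin L, c1 * c1 :=
        Finset.sum_congr rfl fun i _ => by
          rw [eC _ _ hj, w1lo _ (hlow i), eC _ _ hk, w1lo _ (hlow i)]
      have e2 : (∑ i : Fin (K - L), C ⟨L + (i:ℕ), by have := i.isLt; omega⟩ j *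
          C ⟨L + (i:ℕ), by have := i.isLt; omega⟩ k)
          = ∑ _i : Fin (K - L), d1 * d1 :=
        Finset.sum_congr rfl fun i _ => by
          rw [eC _ _ hj, w1hi _ (hhigh i), eC _ _ hk, w1hi _ (hhigh i)]
      rw [e1, e2, Finset.sum_const, Finset.sum_const, if_pos heq]
      simpa [Finset.card_univ, nsmul_eq_mul] using h11
    · -- C D
      have e1 : (∑ i : Fin L, C ⟨(i:ℕ), by omega⟩ j * C ⟨(i:ℕ), by omega⟩ k)
          = ∑ _i : Fin L, c1 * c2 :=
        Finset.sum_congr rfl fun i _ => by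
          rw [eC _ _ hj, w1lo _ (hlow i), eD _ _ hk, w2lo _ (hlow i)]
      have e2 : (∑ i : Fin (K - L), C ⟨L + (i:ℕ), by have := i.isLt; omega⟩ j *
          C ⟨L + (i:ℕ), by have := i.isLt; omega⟩ k)
          = ∑ _i : Fin (K - L), d1 * d2 :=
        Finset.sum_congr rfl fun i _ => by
          rw [eC _ _ hj, w1hi _ (hhigh i), eD _ _ hk, w2hi _ (hhigh i)]
      rw [e1, e2, Finset.sum_const, Finset.sum_const, if_neg (by intro h; subst h; omega)]
      simpa [Finset.card_univ, nsmul_eq_mul] using h12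
  · rcases hk4 with hk | ⟨hk1, hk2⟩ | hk | hk
    · -- D A
      have e1 : (∑ i : Fin L, C ⟨(i:ℕ), by omega⟩ j * C ⟨(i:ℕ), by omega⟩ k)
          = ∑ i : Fin L, c2 * R1 i ⟨(k:ℕ), hk⟩ :=
        Finset.sum_congr rfl fun i _ => by
          rw [eD _ _ hj, w2lo _ (hlow i), eA _ _ hk (hlow i)]
      have e2 : (∑ i : Fin (K - L), C ⟨L + (i:ℕ), by have := i.isLt; omega⟩ j *
          C ⟨L + (i:ℕ), by have := i.isLt; omega⟩ k) = 0 :=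
        Finset.sum_eq_zero fun i _ => by rw [eA' _ _ hk (hhigh i), mul_zero]
      rw [e1, e2, add_zero, ← Finset.mul_sum, hR1s, mul_zero,
        if_neg (by intro h; subst h; omega)]
    · -- D B
      have e1 : (∑ i : Fin L, C ⟨(i:ℕ), by omega⟩ j * C ⟨(i:ℕ), by omega⟩ k) = 0 :=
        Finset.sum_eq_zero fun i _ => by rw [eB _ _ hk1 hk2 (hlow i), mul_zero]
      have e2 : (∑ i : Fin (K - L), C ⟨L + (i:ℕ), by have := i.isLt; omega⟩ j *
          C ⟨L + (i:ℕ), by have := i.isLt; omega⟩ k)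
          = ∑ i : Fin (K - L), d2 * R2 i ⟨(k:ℕ) - (L - 1), by omega⟩ :=
        Finset.sum_congr rfl fun i _ => by
          rw [eD _ _ hj, w2hi _ (hhigh i), eB' _ _ hk1 hk2 (hhigh i)]
          rw [idx]
      rw [e1, e2, zero_add, ← Finset.mul_sum, hR2s, mul_zero,
        if_neg (by intro h; subst h; omega)]
    · -- D C
      have e1 : (∑ i : Fin L, C ⟨(i:ℕ), by omega⟩ j * C ⟨(i:ℕ), by omega⟩ k)
          = ∑ _i : Fin L, c2 * c1 :=
        Finset.sum_congr rfl fun i _ => by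
          rw [eD _ _ hj, w2lo _ (hlow i), eC _ _ hk, w1lo _ (hlow i)]
      have e2 : (∑ i : Fin (K - L), C ⟨L + (i:ℕ), by have := i.isLt; omega⟩ j *
          C ⟨L + (i:ℕ), by have := i.isLt; omega⟩ k)
          = ∑ _i : Fin (K - L), d2 * d1 :=
        Finset.sum_congr rfl fun i _ => by
          rw [eD _ _ hj, w2hi _ (hhigh i), eC _ _ hk, w1hi _ (hhigh i)]
      rw [e1, e2, Finset.sum_const, Finset.sum_const, if_neg (by intro h; subst h; omega)]
      have : (L : ℝ) * (c2 * c1) + ((K - L : ℕ) : ℝ) * (d2 * d1) = 0 := by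
        rw [mul_comm c2 c1, mul_comm d2 d1]; exact h12
      simpa [Finset.card_univ, nsmul_eq_mul] using this
    · -- D D
      have heq : j = k := Fin.ext (by omega)
      have e1 : (∑ i : Fin L, C ⟨(i:ℕ), by omega⟩ j * C ⟨(i:ℕ), by omega⟩ k)
          = ∑ _i : Fin L, c2 * c2 :=
        Finset.sum_congr rfl fun i _ => by
          rw [eD _ _ hj, w2lo _ (hlow i), eD _ _ hk, w2lo _ (hlow i)]
      have e2 : (∑ i : Fin (K - L), C ⟨L + (i:ℕ), by have := i.isLt; omega⟩ j *
          C ⟨L + (i:ℕ), by have := i.isLt; omega⟩ k)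
          = ∑ _i : Fin (K - L), d2 * d2 :=
        Finset.sum_congr rfl fun i _ => by
          rw [eD _ _ hj, w2hi _ (hhigh i), eD _ _ hk, w2hi _ (hhigh i)]
      rw [e1, e2, Finset.sum_const, Finset.sum_const, if_pos heq]
      simpa [Finset.card_univ, nsmul_eq_mul] using h22


/-- Explicit SVD of `X = diag(x) - K⁻¹·𝟙_K xᵀ` where `x = (a𝟙_L ; b𝟙_{K-L})`:
`U`, `V` are orthogonal and `X = U Σ Vᵀ` with
`Σ = diag(a𝟙_{L-1}, b𝟙_{K-L-1}, √((a²(K-L)+b²L)/K), 0)`. -/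
theorem stmt9 (K L : ℕ) (hL1 : 1 ≤ L) (hLK : L + 1 ≤ K)
    (a b : ℝ) (ha : 0 < a) (hb : 0 < b)
    (x : Fin K → ℝ) (hx : x = fun i : Fin K => if (i : ℕ) < L then a else b)
    (X : Matrix (Fin K) (Fin K) ℝ)
    (hX : X = Matrix.diagonal x - (K : ℝ)⁻¹ • vecMulVec (fun _ : Fin K => (1 : ℝ)) x)
    (R1 : Matrix (Fin L) (Fin (L - 1)) ℝ) (R2 : Matrix (Fin (K - L)) (Fin (K - L - 1)) ℝ)
    (hR1o : R1ᵀ * R1 = 1) (hR1s : ∀ j, ∑ i, R1 i j = 0)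
    (hR2o : R2ᵀ * R2 = 1) (hR2s : ∀ j, ∑ i, R2 i j = 0)
    (u1 u2 v1 v2 : Fin K → ℝ)
    (hv1 : v1 = fun i : Fin K =>
      (Real.sqrt (a ^ 2 * ((K : ℝ) - L) + b ^ 2 * L))⁻¹ *
        (if (i : ℕ) < L then a * Real.sqrt ((K : ℝ) - L) / Real.sqrt L
         else -(b * Real.sqrt L / Real.sqrt ((K : ℝ) - L))))
    (hv2 : v2 = fun i : Fin K =>
      (Real.sqrt (a ^ 2 * ((K : ℝ) - L) + b ^ 2 * L))⁻¹ *
        (if (i : ℕ) < L then b else a))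
    (hu1 : u1 = fun i : Fin K =>
      (Real.sqrt ((K : ℝ) * L * ((K : ℝ) - L)))⁻¹ *
        (if (i : ℕ) < L then (K : ℝ) - L else -(L : ℝ)))
    (hu2 : u2 = fun _ : Fin K => (Real.sqrt (K : ℝ))⁻¹)
    (U V : Matrix (Fin K) (Fin K) ℝ)
    (hU : U = colBlocks K L hL1 hLK R1 R2 u1 u2)
    (hV : V = colBlocks K L hL1 hLK R1 R2 v1 v2)
    (S : Matrix (Fin K) (Fin K) ℝ)
    (hS : S = Matrix.diagonal fun j : Fin K =>
      if (j : ℕ) < L - 1 then a else if (j : ℕ) < K - 2 then b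
      else if (j : ℕ) = K - 2 then
        Real.sqrt ((a ^ 2 * ((K : ℝ) - L) + b ^ 2 * L) / K) else 0) :
    Uᵀ * U = 1 ∧ U * Uᵀ = 1 ∧ Vᵀ * V = 1 ∧ V * Vᵀ = 1 ∧ X = U * S * Vᵀ := by
  have hKpos : (0:ℝ) < (K:ℝ) := by
    have : (0:ℕ) < K := by omega
    exact_mod_cast this
  have hLpos : (0:ℝ) < (L:ℝ) := by
    have : (0:ℕ) < L := by omega
    exact_mod_cast this
  have hMpos : (0:ℝ) < (K:ℝ) - (L:ℝ) := by
    have : (L:ℝ) + 1 ≤ (K:ℝ) := by exact_mod_cast hLK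
    linarith
  have hcast : ((K - L : ℕ) : ℝ) = (K:ℝ) - (L:ℝ) := by
    push_cast [Nat.cast_sub (by omega : L ≤ K)]; ring
  set sk := Real.sqrt (K:ℝ) with hsk
  set sl := Real.sqrt (L:ℝ) with hsl
  set sm := Real.sqrt ((K:ℝ) - (L:ℝ)) with hsm
  have hsk2 : sk ^ 2 = (K:ℝ) := Real.sq_sqrt hKpos.le
  have hsl2 : sl ^ 2 = (L:ℝ) := Real.sq_sqrt hLpos.le
  have hsm2 : sm ^ 2 = (K:ℝ) - (L:ℝ) := Real.sq_sqrt hMpos.le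
  have hsk0 : 0 < sk := Real.sqrt_pos.mpr hKpos
  have hsl0 : 0 < sl := Real.sqrt_pos.mpr hLpos
  have hsm0 : 0 < sm := Real.sqrt_pos.mpr hMpos
  have hQpos : (0:ℝ) < a ^ 2 * ((K:ℝ) - L) + b ^ 2 * L := by
    have h1 : 0 < a ^ 2 * ((K:ℝ) - L) := by
      apply mul_pos (by positivity) hMpos
    have h2 : 0 < b ^ 2 * (L:ℝ) := by
      apply mul_pos (by positivity) hLpos
    linarith
  set N := Real.sqrt (a ^ 2 * ((K:ℝ) - L) + b ^ 2 * L) with hN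
  have hN2 : N ^ 2 = a ^ 2 * ((K:ℝ) - L) + b ^ 2 * L := Real.sq_sqrt hQpos.le
  have hN0 : 0 < N := Real.sqrt_pos.mpr hQpos
  have hN2' : N ^ 2 = a ^ 2 * sm ^ 2 + b ^ 2 * sl ^ 2 := by rw [hN2, hsm2, hsl2]
  have hksum : sk ^ 2 = sl ^ 2 + sm ^ 2 := by rw [hsk2, hsl2, hsm2]; ring
  have hsprod : Real.sqrt ((K:ℝ) * L * ((K:ℝ) - L)) = sk * sl * sm := by
    rw [show (K:ℝ) * L * ((K:ℝ) - L) = (sk * sl * sm) ^ 2 by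
      rw [mul_pow, mul_pow, hsk2, hsl2, hsm2]]
    exact Real.sqrt_sq (by positivity)
  have hsig : Real.sqrt ((a ^ 2 * ((K:ℝ) - L) + b ^ 2 * L) / K) = N / sk := by
    rw [show (a ^ 2 * ((K:ℝ) - L) + b ^ 2 * L) / K = (N / sk) ^ 2 by
      rw [div_pow, hN2, hsk2]]
    exact Real.sqrt_sq (by positivity)
  -- orthogonality of U
  have hUo : Uᵀ * U = 1 := by
    rw [hU]
    apply colBlocks_orth K L hL1 hLK R1 R2 hR1o hR1s hR2o hR2s
      ((sk * sl * sm)⁻¹ * ((K:ℝ) - L)) ((sk * sl * sm)⁻¹ * (-(L:ℝ)))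
      sk⁻¹ sk⁻¹
    · intro i
      rw [hu1, hsprod]
      by_cases h : (i:ℕ) < L <;> simp [h]
    · intro i
      rw [hu2]
      simp [hsk]
    · rw [hcast, ← hsm2, ← hsl2]
      field_simp
      linear_combination -hksum
    · rw [hcast, ← hsm2, ← hsl2]
      field_simp
      linear_combination -hksum
    · rw [hcast, ← hsm2, ← hsl2]
      field_simp
      ring
  -- orthogonality of V
  have hVo : Vᵀ * V = 1 := by
    rw [hV]
    apply colBlocks_orth K L hL1 hLK R1 R2 hR1o hR1s hR2o hR2s
      (N⁻¹ * (a * sm / sl)) (N⁻¹ * (-(b * sl / sm))) (N⁻¹ * b) (N⁻¹ * a)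
    · intro i
      rw [hv1]
      by_cases h : (i:ℕ) < L <;> simp [h, hN, hsl, hsm]
    · intro i
      rw [hv2]
      by_cases h : (i:ℕ) < L <;> simp [h, hN]
    · rw [hcast, ← hsm2, ← hsl2]
      field_simp
      linear_combination -hN2'
    · rw [hcast, ← hsm2, ← hsl2]
      field_simp
      linear_combination -hN2'
    · rw [hcast, ← hsm2, ← hsl2]
      field_simp
      ring

  refine ⟨hUo, mul_eq_one_comm.mp hUo, hVo, mul_eq_one_comm.mp hVo, ?_⟩
  -- value lemmas for the last two columns
  have u1lo : ∀ p : Fin K, (p:ℕ) < L → u1 p = (sk * sl * sm)⁻¹ * ((K:ℝ) - L) := by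
    intro p hp; simp only [hu1]; rw [if_pos hp, hsprod]
  have u1hi : ∀ p : Fin K, ¬ (p:ℕ) < L → u1 p = (sk * sl * sm)⁻¹ * (-(L:ℝ)) := by
    intro p hp; simp only [hu1]; rw [if_neg hp, hsprod]
  have v1lo : ∀ p : Fin K, (p:ℕ) < L → v1 p = N⁻¹ * (a * sm / sl) := by
    intro p hp; simp only [hv1]; rw [if_pos hp]
  have v1hi : ∀ p : Fin K, ¬ (p:ℕ) < L → v1 p = N⁻¹ * (-(b * sl / sm)) := by
    intro p hp; simp only [hv1]; rw [if_neg hp]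
  -- region index facts
  have hA : ∀ j : Fin (L - 1), ((⟨(j:ℕ), by omega⟩ : Fin K) : ℕ) < L - 1 := fun j => j.isLt
  have hB1 : ∀ j : Fin (K - L - 1),
      ¬ ((⟨L - 1 + (j:ℕ), by have := j.isLt; omega⟩ : Fin K) : ℕ) < L - 1 := by
    intro j; show ¬ L - 1 + (j:ℕ) < L - 1; omega
  have hB2 : ∀ j : Fin (K - L - 1),
      ((⟨L - 1 + (j:ℕ), by have := j.isLt; omega⟩ : Fin K) : ℕ) < K - 2 := by
    intro j; show L - 1 + (j:ℕ) < K - 2; have := j.isLt; omega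
  have hC1 : ¬ ((⟨K - 2, by omega⟩ : Fin K) : ℕ) < L - 1 := by show ¬ K - 2 < L - 1; omega
  have hC2 : ¬ ((⟨K - 2, by omega⟩ : Fin K) : ℕ) < K - 2 := by show ¬ K - 2 < K - 2; omega
  have hC3 : ((⟨K - 2, by omega⟩ : Fin K) : ℕ) = K - 2 := rfl
  have hD1 : ¬ ((⟨K - 1, by omega⟩ : Fin K) : ℕ) < L - 1 := by show ¬ K - 1 < L - 1; omega
  have hD2 : ¬ ((⟨K - 1, by omega⟩ : Fin K) : ℕ) < K - 2 := by show ¬ K - 1 < K - 2; omega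
  have hD3 : ¬ ((⟨K - 1, by omega⟩ : Fin K) : ℕ) = K - 2 := by show ¬ K - 1 = K - 2; omega
  have idx2 : ∀ (j : Fin (K - L - 1)) (h : L - 1 + (j:ℕ) - (L - 1) < K - L - 1),
      (⟨L - 1 + (j:ℕ) - (L - 1), h⟩ : Fin (K - L - 1)) = j := by
    intro j h; exact Fin.ext (by show L - 1 + (j:ℕ) - (L - 1) = (j:ℕ); omega)
  have g1 : ∀ p q : Fin L, ∑ j, R1 p j * R1 q j = (if p = q then 1 else 0) - ((L:ℕ) : ℝ)⁻¹ :=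
    gram_rows hL1 R1 hR1o hR1s
  have g2 : ∀ p q : Fin (K - L), ∑ j, R2 p j * R2 q j
      = (if p = q then 1 else 0) - ((K:ℝ) - L)⁻¹ := by
    intro p q
    rw [gram_rows (by omega : 1 ≤ K - L) R2 hR2o hR2s p q, hcast]
  -- entry lemmas for U and V
  have cbAU : ∀ (p q : Fin K) (hq : (q:ℕ) < L - 1) (hp : (p:ℕ) < L),
      U p q = R1 ⟨(p:ℕ), hp⟩ ⟨(q:ℕ), hq⟩ := fun p q hq hp => by rw [hU]; exact cbA hq hp
  have cbAU' : ∀ (p q : Fin K), (q:ℕ) < L - 1 → ¬ (p:ℕ) < L → U p q = 0 :=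
    fun p q hq hp => by rw [hU]; exact cbA' hq hp
  have cbBU : ∀ (p q : Fin K), ¬ (q:ℕ) < L - 1 → (q:ℕ) < K - 2 → (p:ℕ) < L → U p q = 0 :=
    fun p q hq1 hq2 hp => by rw [hU]; exact cbB hq1 hq2 hp
  have cbBU' : ∀ (p q : Fin K) (hq1 : ¬ (q:ℕ) < L - 1) (hq2 : (q:ℕ) < K - 2)
      (hp : ¬ (p:ℕ) < L), U p q
        = R2 ⟨(p:ℕ) - L, by have := p.isLt; omega⟩ ⟨(q:ℕ) - (L - 1), by omega⟩ :=
    fun p q hq1 hq2 hp => by rw [hU]; exact cbB' hq1 hq2 hp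
  have cbCU : ∀ (p q : Fin K), (q:ℕ) = K - 2 → U p q = u1 p :=
    fun p q hq => by rw [hU]; exact cbC hq
  have cbDU : ∀ (p q : Fin K), (q:ℕ) = K - 1 → U p q = u2 p :=
    fun p q hq => by rw [hU]; exact cbD hq
  have cbAV : ∀ (p q : Fin K) (hq : (q:ℕ) < L - 1) (hp : (p:ℕ) < L),
      V p q = R1 ⟨(p:ℕ), hp⟩ ⟨(q:ℕ), hq⟩ := fun p q hq hp => by rw [hV]; exact cbA hq hp
  have cbAV' : ∀ (p q : Fin K), (q:ℕ) < L - 1 → ¬ (p:ℕ) < L → V p q = 0 :=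
    fun p q hq hp => by rw [hV]; exact cbA' hq hp
  have cbBV : ∀ (p q : Fin K), ¬ (q:ℕ) < L - 1 → (q:ℕ) < K - 2 → (p:ℕ) < L → V p q = 0 :=
    fun p q hq1 hq2 hp => by rw [hV]; exact cbB hq1 hq2 hp
  have cbBV' : ∀ (p q : Fin K) (hq1 : ¬ (q:ℕ) < L - 1) (hq2 : (q:ℕ) < K - 2)
      (hp : ¬ (p:ℕ) < L), V p q
        = R2 ⟨(p:ℕ) - L, by have := p.isLt; omega⟩ ⟨(q:ℕ) - (L - 1), by omega⟩ :=
    fun p q hq1 hq2 hp => by rw [hV]; exact cbB' hq1 hq2 hp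
  have cbCV : ∀ (p q : Fin K), (q:ℕ) = K - 2 → V p q = v1 p :=
    fun p q hq => by rw [hV]; exact cbC hq
  have cbDV : ∀ (p q : Fin K), (q:ℕ) = K - 1 → V p q = v2 p :=
    fun p q hq => by rw [hV]; exact cbD hq
  -- (U * S) entries by column region
  have hUSA : ∀ p q : Fin K, (q:ℕ) < L - 1 → (U * S) p q = U p q * a := by
    intro p q hq
    rw [hS, Matrix.mul_diagonal]
    rw [if_pos hq]
  have hUSB : ∀ p q : Fin K, ¬ (q:ℕ) < L - 1 → (q:ℕ) < K - 2 → (U * S) p q = U p q * b := by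
    intro p q hq1 hq2
    rw [hS, Matrix.mul_diagonal]
    rw [if_neg hq1, if_pos hq2]
  have hUSC : ∀ p q : Fin K, (q:ℕ) = K - 2 → (U * S) p q = U p q * (N / sk) := by
    intro p q hq
    rw [hS, Matrix.mul_diagonal]
    rw [if_neg (by omega : ¬ (q:ℕ) < L - 1), if_neg (by omega : ¬ (q:ℕ) < K - 2),
      if_pos hq, hsig]
  have hUSD : ∀ p q : Fin K, (q:ℕ) = K - 1 → (U * S) p q = 0 := by
    intro p q hq
    rw [hS, Matrix.mul_diagonal]
    rw [if_neg (by omega : ¬ (q:ℕ) < L - 1), if_neg (by omega : ¬ (q:ℕ) < K - 2),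
      if_neg (by omega : ¬ (q:ℕ) = K - 2), mul_zero]
  have hD4 : ((⟨K - 1, by omega⟩ : Fin K) : ℕ) = K - 1 := rfl
  ext i k
  have expand : (U * S * Vᵀ) i k = ∑ j, (U * S) i j * V k j := by
    rw [Matrix.mul_apply]
    exact Finset.sum_congr rfl fun j _ => by rw [Matrix.transpose_apply]
  rw [hX, hx]
  simp only [Matrix.sub_apply, Matrix.smul_apply, Matrix.diagonal_apply,
    Matrix.vecMulVec_apply, smul_eq_mul, one_mul]
  rw [expand, split4 K L hL1 hLK (fun j => (U * S) i j * V k j)]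
  have sD : (U * S) i ⟨K - 1, by omega⟩ * V k ⟨K - 1, by omega⟩ = 0 := by
    simp only [hUSD i ⟨K - 1, by omega⟩ hD4, zero_mul]
  by_cases hi : (i:ℕ) < L <;> by_cases hk : (k:ℕ) < L
  · -- i, k both lower
    have hδ : ((⟨(i:ℕ), hi⟩ : Fin L) = ⟨(k:ℕ), hk⟩) = (i = k) := by
      apply propext
      constructor
      · intro h
        have h2 := congrArg Fin.val h
        exact Fin.ext h2
      · intro h
        subst h
        rfl
    have sA : (∑ j : Fin (L - 1), (U * S) i ⟨(j:ℕ), by omega⟩ * V k ⟨(j:ℕ), by omega⟩)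
        = a * ((if i = k then 1 else 0) - ((L:ℕ) : ℝ)⁻¹) := by
      calc (∑ j : Fin (L - 1), (U * S) i ⟨(j:ℕ), by omega⟩ * V k ⟨(j:ℕ), by omega⟩)
          = ∑ j : Fin (L - 1), a * (R1 ⟨(i:ℕ), hi⟩ j * R1 ⟨(k:ℕ), hk⟩ j) :=
            Finset.sum_congr rfl fun j _ => by
              simp only [hUSA _ _ (hA j), cbAU _ _ (hA j) hi, cbAV _ _ (hA j) hk]
              ring
        _ = a * ∑ j : Fin (L - 1), R1 ⟨(i:ℕ), hi⟩ j * R1 ⟨(k:ℕ), hk⟩ j :=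
            (Finset.mul_sum _ _ _).symm
        _ = a * ((if i = k then 1 else 0) - ((L:ℕ) : ℝ)⁻¹) := by
            rw [g1]
            simp only [hδ]
    have sB : (∑ j : Fin (K - L - 1), (U * S) i ⟨L - 1 + (j:ℕ), by have := j.isLt; omega⟩ *
        V k ⟨L - 1 + (j:ℕ), by have := j.isLt; omega⟩) = 0 :=
      Finset.sum_eq_zero fun j _ => by
        simp only [hUSB _ _ (hB1 j) (hB2 j), cbBU _ _ (hB1 j) (hB2 j) hi, zero_mul, mul_zero]
    have sC : (U * S) i ⟨K - 2, by omega⟩ * V k ⟨K - 2, by omega⟩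
        = ((sk * sl * sm)⁻¹ * ((K:ℝ) - L)) * (N / sk) * (N⁻¹ * (a * sm / sl)) := by
      simp only [hUSC _ _ hC3, cbCU _ _ hC3, cbCV _ _ hC3, u1lo i hi, v1lo k hk]
    simp only [sA, sB, sC, sD]
    by_cases hik : i = k
    · subst hik
      rw [if_pos rfl, if_pos rfl, if_pos hi]
      try rw [← hsm2]
      try rw [← hsl2]
      try rw [← hsk2]
      field_simp
      linear_combination a * hksum
    · rw [if_neg hik, if_neg hik, if_pos hk]
      try rw [← hsm2]
      try rw [← hsl2]
      try rw [← hsk2]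
      field_simp
      linear_combination a * hksum
  · -- i lower, k upper
    have sA : (∑ j : Fin (L - 1), (U * S) i ⟨(j:ℕ), by omega⟩ * V k ⟨(j:ℕ), by omega⟩) = 0 :=
      Finset.sum_eq_zero fun j _ => by simp only [cbAV' _ _ (hA j) hk, mul_zero]
    have sB : (∑ j : Fin (K - L - 1), (U * S) i ⟨L - 1 + (j:ℕ), by have := j.isLt; omega⟩ *
        V k ⟨L - 1 + (j:ℕ), by have := j.isLt; omega⟩) = 0 :=
      Finset.sum_eq_zero fun j _ => by
        simp only [hUSB _ _ (hB1 j) (hB2 j), cbBU _ _ (hB1 j) (hB2 j) hi, zero_mul, mul_zero]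
    have sC : (U * S) i ⟨K - 2, by omega⟩ * V k ⟨K - 2, by omega⟩
        = ((sk * sl * sm)⁻¹ * ((K:ℝ) - L)) * (N / sk) * (N⁻¹ * (-(b * sl / sm))) := by
      simp only [hUSC _ _ hC3, cbCU _ _ hC3, cbCV _ _ hC3, u1lo i hi, v1hi k hk]
    have hik : ¬ i = k := fun h => hk (h ▸ hi)
    simp only [sA, sB, sC, sD]
    rw [if_neg hik, if_neg hk]
    try rw [← hsm2]
    try rw [← hsl2]
    try rw [← hsk2]
    field_simp
    ring
  · -- i upper, k lower
    have sA : (∑ j : Fin (L - 1), (U * S) i ⟨(j:ℕ), by omega⟩ * V k ⟨(j:ℕ), by omega⟩) = 0 :=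
      Finset.sum_eq_zero fun j _ => by
        simp only [hUSA _ _ (hA j), cbAU' _ _ (hA j) hi, zero_mul, mul_zero]
    have sB : (∑ j : Fin (K - L - 1), (U * S) i ⟨L - 1 + (j:ℕ), by have := j.isLt; omega⟩ *
        V k ⟨L - 1 + (j:ℕ), by have := j.isLt; omega⟩) = 0 :=
      Finset.sum_eq_zero fun j _ => by
        simp only [cbBV _ _ (hB1 j) (hB2 j) hk, mul_zero]
    have sC : (U * S) i ⟨K - 2, by omega⟩ * V k ⟨K - 2, by omega⟩
        = ((sk * sl * sm)⁻¹ * (-(L:ℝ))) * (N / sk) * (N⁻¹ * (a * sm / sl)) := by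
      simp only [hUSC _ _ hC3, cbCU _ _ hC3, cbCV _ _ hC3, u1hi i hi, v1lo k hk]
    have hik : ¬ i = k := fun h => hi (h ▸ hk)
    simp only [sA, sB, sC, sD]
    rw [if_neg hik, if_pos hk]
    try rw [← hsm2]
    try rw [← hsl2]
    try rw [← hsk2]
    field_simp
    ring
  · -- i, k both upper
    have hδ : ((⟨(i:ℕ) - L, by have := i.isLt; omega⟩ : Fin (K - L))
        = ⟨(k:ℕ) - L, by have := k.isLt; omega⟩) = (i = k) := by
      apply propext
      constructor
      · intro h
        have h2 := congrArg Fin.val h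
        have h3 : (i:ℕ) - L = (k:ℕ) - L := h2
        exact Fin.ext (by omega)
      · intro h
        subst h
        rfl
    have sA : (∑ j : Fin (L - 1), (U * S) i ⟨(j:ℕ), by omega⟩ * V k ⟨(j:ℕ), by omega⟩) = 0 :=
      Finset.sum_eq_zero fun j _ => by
        simp only [hUSA _ _ (hA j), cbAU' _ _ (hA j) hi, zero_mul, mul_zero]
    have sB : (∑ j : Fin (K - L - 1), (U * S) i ⟨L - 1 + (j:ℕ), by have := j.isLt; omega⟩ *
        V k ⟨L - 1 + (j:ℕ), by have := j.isLt; omega⟩)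
        = b * ((if i = k then 1 else 0) - ((K:ℝ) - L)⁻¹) := by
      calc (∑ j : Fin (K - L - 1), (U * S) i ⟨L - 1 + (j:ℕ), by have := j.isLt; omega⟩ *
          V k ⟨L - 1 + (j:ℕ), by have := j.isLt; omega⟩)
          = ∑ j : Fin (K - L - 1), b * (R2 ⟨(i:ℕ) - L, by have := i.isLt; omega⟩ j *
              R2 ⟨(k:ℕ) - L, by have := k.isLt; omega⟩ j) :=
            Finset.sum_congr rfl fun j _ => by
              simp only [hUSB _ _ (hB1 j) (hB2 j), cbBU' _ _ (hB1 j) (hB2 j) hi,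
                cbBV' _ _ (hB1 j) (hB2 j) hk, idx2]
              ring
        _ = b * ∑ j : Fin (K - L - 1), R2 ⟨(i:ℕ) - L, by have := i.isLt; omega⟩ j *
              R2 ⟨(k:ℕ) - L, by have := k.isLt; omega⟩ j :=
            (Finset.mul_sum _ _ _).symm
        _ = b * ((if i = k then 1 else 0) - ((K:ℝ) - L)⁻¹) := by
            rw [g2]
            simp only [hδ]
    have sC : (U * S) i ⟨K - 2, by omega⟩ * V k ⟨K - 2, by omega⟩
        = ((sk * sl * sm)⁻¹ * (-(L:ℝ))) * (N / sk) * (N⁻¹ * (-(b * sl / sm))) := by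
      simp only [hUSC _ _ hC3, cbCU _ _ hC3, cbCV _ _ hC3, u1hi i hi, v1hi k hk]
    simp only [sA, sB, sC, sD]
    by_cases hik : i = k
    · subst hik
      rw [if_pos rfl, if_pos rfl, if_neg hi]
      try rw [← hsm2]
      try rw [← hsl2]
      try rw [← hsk2]
      field_simp
      linear_combination b * hksum
    · rw [if_neg hik, if_neg hik, if_neg hk]
      try rw [← hsm2]
      try rw [← hsl2]
      try rw [← hsk2]
      field_simp
      linear_combination b * hksum


end
end

section
/- The gradient of the population loss at W₀ = 0 satisfies −∇_W 𝓛(W₀) = (α/L)·Ẽ_{1:L}E_{1:L}ᵀ + ((1−α)/(K−L))·Ẽ_{L+1:K}E_{L+1:K}ᵀ − (α/(LK))·Ẽ·J_{K,L}·E_{1:L}ᵀ − ((1−α)/((K−L)K))·Ẽ·J_{K,K−L}·E_{L+1:K}ᵀ. -/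
noncomputable section

open Matrix

attribute [local instance] Matrix.normedAddCommGroup Matrix.normedSpace

/-- Indicator of the first `L` coordinates. -/
def indL (K L : ℕ) : Fin K → ℝ := fun i => if (i : ℕ) < L then 1 else 0

/-- Indicator of the last `K - L` coordinates. -/
def indU (K L : ℕ) : Fin K → ℝ := fun i => if (i : ℕ) < L then 0 else 1

def phiLM {K : ℕ} (Et Ee : Matrix (Fin K) (Fin K) ℝ) (k' k : Fin K) :
    Matrix (Fin K) (Fin K) ℝ →ₗ[ℝ] ℝ where
  toFun H := (Etᵀ * H * Ee) k' k
  map_add' H H' := by simp [Matrix.mul_add, Matrix.add_mul]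
  map_smul' c H := by simp [Matrix.mul_smul, Matrix.smul_mul]

def phi {K : ℕ} (Et Ee : Matrix (Fin K) (Fin K) ℝ) (k' k : Fin K) :
    Matrix (Fin K) (Fin K) ℝ →L[ℝ] ℝ :=
  LinearMap.toContinuousLinearMap (phiLM Et Ee k' k)

@[simp] lemma phi_apply {K : ℕ} (Et Ee : Matrix (Fin K) (Fin K) ℝ) (k' k : Fin K)
    (H : Matrix (Fin K) (Fin K) ℝ) : phi Et Ee k' k H = (Etᵀ * H * Ee) k' k := rfl

lemma ploss_eq {K : ℕ} (hK : 0 < K) (L : ℕ) (α : ℝ) (Et Ee : Matrix (Fin K) (Fin K) ℝ) :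
    ploss L α Et Ee = fun W => ∑ k : Fin K,
      (pclass K L α k * Real.log (∑ k'' : Fin K, Real.exp (phi Et Ee k'' k W))
        - pclass K L α k * phi Et Ee k k W) := by
  haveI : NeZero K := ⟨hK.ne'⟩
  funext W
  unfold ploss prob
  rw [neg_eq_iff_eq_neg, ← Finset.sum_neg_distrib]
  refine Finset.sum_congr rfl fun k _ => ?_
  have hS : 0 < ∑ k'' : Fin K, Real.exp ((Etᵀ * W * Ee) k'' k) :=
    Finset.sum_pos (fun _ _ => Real.exp_pos _) Finset.univ_nonempty
  rw [Real.log_div (Real.exp_ne_zero _) hS.ne', Real.log_exp]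
  simp only [phi_apply]
  ring

lemma key_deriv {K : ℕ} (hK : 0 < K) (L : ℕ) (α : ℝ) (Et Ee : Matrix (Fin K) (Fin K) ℝ) :
    HasFDerivAt (ploss L α Et Ee)
      (∑ k : Fin K, (pclass K L α k • ((∑ k'' : Fin K, Real.exp (phi Et Ee k'' k 0))⁻¹ •
          ∑ k'' : Fin K, Real.exp (phi Et Ee k'' k 0) • phi Et Ee k'' k)
        - pclass K L α k • phi Et Ee k k)) 0 := by
  haveI : NeZero K := ⟨hK.ne'⟩
  rw [ploss_eq hK]
  refine HasFDerivAt.fun_sum fun k _ => HasFDerivAt.sub ?_ ?_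
  · refine HasFDerivAt.const_mul ?_ _
    refine HasFDerivAt.log (HasFDerivAt.fun_sum fun k'' _ => ?_) ?_
    · exact ((phi Et Ee k'' k).hasFDerivAt).exp
    · have : 0 < ∑ k'' : Fin K, Real.exp (phi Et Ee k'' k 0) :=
        Finset.sum_pos (fun _ _ => Real.exp_pos _) Finset.univ_nonempty
      exact this.ne'
  · exact ((phi Et Ee k k).hasFDerivAt).const_mul _

lemma trace_std {K : ℕ} (G : Matrix (Fin K) (Fin K) ℝ) (i j : Fin K) :
    (Gᵀ * Matrix.single i j 1).trace = G i j := by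
  simp [Matrix.trace, Matrix.diag, Matrix.mul_apply, Matrix.single, ite_and,
    Finset.sum_ite_eq, Finset.sum_ite_eq']

lemma entry_std {K : ℕ} (Et Ee : Matrix (Fin K) (Fin K) ℝ) (i j k' k : Fin K) :
    (Etᵀ * Matrix.single i j (1:ℝ) * Ee) k' k = Et i k' * Ee j k := by
  simp [Matrix.mul_apply, Matrix.single, ite_and, Finset.sum_ite_eq,
    Finset.sum_ite_eq', Finset.mul_sum, Finset.sum_mul]

/-- Gradient of the population loss at `W₀ = 0`:
`-∇𝓛(W₀) = (α/L)Ẽ_{1:L}E_{1:L}ᵀ + ((1-α)/(K-L))Ẽ_{L+1:K}E_{L+1:K}ᵀ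
 - (α/(LK))Ẽ J_{K,L} E_{1:L}ᵀ - ((1-α)/((K-L)K))Ẽ J_{K,K-L} E_{L+1:K}ᵀ`.
Here `Ẽ_{1:L}E_{1:L}ᵀ = Ẽ diag(χ_L) Eᵀ` and `Ẽ J_{K,L} E_{1:L}ᵀ = Ẽ (𝟙_K (E χ_L)ᵀ)`. -/
theorem stmt10 {K : ℕ} (hK : 2 ≤ K) (Et Ee : Matrix (Fin K) (Fin K) ℝ)
    (hEe : Eeᵀ * Ee = 1) (hEt : Etᵀ * Et = 1)
    (α β : ℝ) (hα : α ∈ Set.Ioo (0:ℝ) 1) (hβ : β ∈ Set.Ioo (0:ℝ) 1)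
    (L : ℕ) (hLβ : (L : ℝ) = β * K) (hL1 : 1 ≤ L) (hLK : L ≤ K - 1)
    (G : Matrix (Fin K) (Fin K) ℝ) (hG : IsGradientAt (ploss L α Et Ee) G 0) :
    -G = (α / L) • (Et * Matrix.diagonal (indL K L) * Eeᵀ)
        + ((1 - α) / ((K : ℝ) - L)) • (Et * Matrix.diagonal (indU K L) * Eeᵀ)
        - (α / ((L : ℝ) * K)) •
            (Et * vecMulVec (fun _ : Fin K => (1 : ℝ)) (Ee *ᵥ indL K L))
        - ((1 - α) / (((K : ℝ) - L) * K)) •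
            (Et * vecMulVec (fun _ : Fin K => (1 : ℝ)) (Ee *ᵥ indU K L)) := by
  have hK0 : 0 < K := lt_of_lt_of_le two_pos hK
  obtain ⟨l, hl, hlG⟩ := hG
  have huniq := hl.unique (key_deriv hK0 L α Et Ee)
  have hGval : ∀ H, (Gᵀ * H).trace =
      ∑ k : Fin K, (pclass K L α k * ((K : ℝ)⁻¹ *
          ∑ k'' : Fin K, (Etᵀ * H * Ee) k'' k)
        - pclass K L α k * (Etᵀ * H * Ee) k k) := by
    intro H
    rw [← hlG, huniq]
    simp [ContinuousLinearMap.sum_apply, Finset.card_univ, Finset.mul_sum]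
  ext i j
  have h1 := hGval (Matrix.single i j (1:ℝ))
  rw [trace_std] at h1
  simp only [entry_std] at h1
  have hGij : -G i j = ∑ k : Fin K,
      (pclass K L α k * (Et i k * Ee j k)
        - pclass K L α k * ((K : ℝ)⁻¹ * ((∑ k'' : Fin K, Et i k'') * Ee j k))) := by
    rw [neg_eq_iff_eq_neg, h1, ← Finset.sum_neg_distrib]
    refine Finset.sum_congr rfl fun k _ => ?_
    rw [← Finset.sum_mul]
    ring
  simp only [Matrix.neg_apply] at hGij ⊢
  rw [hGij]
  have hsplit : ∀ f : Fin K → ℝ, ∑ k : Fin K, pclass K L α k * f k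
      = (α / L) * ∑ k : Fin K, indL K L k * f k
        + ((1 - α) / ((K : ℝ) - L)) * ∑ k : Fin K, indU K L k * f k := by
    intro f
    rw [Finset.mul_sum, Finset.mul_sum, ← Finset.sum_add_distrib]
    refine Finset.sum_congr rfl fun k _ => ?_
    unfold pclass indL indU
    by_cases h : (k : ℕ) < L <;> simp [h]
  rw [Finset.sum_sub_distrib, hsplit (fun k => Et i k * Ee j k),
    hsplit (fun k => (K : ℝ)⁻¹ * ((∑ k'' : Fin K, Et i k'') * Ee j k))]
  simp only [Matrix.sub_apply, Matrix.add_apply, Matrix.smul_apply, smul_eq_mul,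
    Matrix.mul_apply, Matrix.diagonal_apply, Matrix.transpose_apply, Matrix.vecMulVec_apply,
    Matrix.mulVec, dotProduct, mul_ite, mul_zero, Finset.sum_ite_eq',
    Finset.mem_univ, if_true, one_mul]
  rw [← Finset.sum_mul, ← Finset.sum_mul]
  have hA : ∀ v : Fin K → ℝ, ∑ k : Fin K, v k * (Et i k * Ee j k)
      = ∑ x : Fin K, Et i x * v x * Ee j x :=
    fun v => Finset.sum_congr rfl fun k _ => by ring
  have hC : ∀ v : Fin K → ℝ,
      ∑ k : Fin K, v k * ((K : ℝ)⁻¹ * ((∑ k'' : Fin K, Et i k'') * Ee j k))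
      = (K : ℝ)⁻¹ * ((∑ k'' : Fin K, Et i k'') * ∑ x : Fin K, Ee j x * v x) := by
    intro v
    rw [Finset.mul_sum, Finset.mul_sum]
    exact Finset.sum_congr rfl fun k _ => by ring
  rw [hA, hA, hC, hC]
  generalize ((K : ℝ) - (L : ℝ)) = c
  ring

end
end

section
/- For every η ≥ 0, the one-step gradient descent iterate W_η = −η·∇_W 𝓛(W₀) satisfies: [f_{W_η}(E_k)]_k = e^{ηγ₁} / (e^{ηγ₁} + K − 1) for every k ≤ L, and [f_{W_η}(E_k)]_k = e^{ηγ₂} / (e^{ηγ₂} + K − 1) for every k > L, where γ₁ = α/L and γ₂ = (1−α)/(K−L). -/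
noncomputable section

open Matrix

attribute [local instance] Matrix.normedAddCommGroup Matrix.normedSpace

namespace Stmt11Aux

variable {K : ℕ}

def aLM (Et Ee : Matrix (Fin K) (Fin K) ℝ) (k' k : Fin K) :
    Matrix (Fin K) (Fin K) ℝ →ₗ[ℝ] ℝ where
  toFun W := (Etᵀ * W * Ee) k' k
  map_add' W W' := by simp [Matrix.mul_add, Matrix.add_mul, Matrix.add_apply]
  map_smul' c W := by simp [Matrix.mul_smul, Matrix.smul_mul, Matrix.smul_apply]

def aCLM (Et Ee : Matrix (Fin K) (Fin K) ℝ) (k' k : Fin K) :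
    Matrix (Fin K) (Fin K) ℝ →L[ℝ] ℝ :=
  LinearMap.toContinuousLinearMap (aLM Et Ee k' k)

@[simp] lemma aCLM_apply (Et Ee : Matrix (Fin K) (Fin K) ℝ) (k' k : Fin K) (W) :
    aCLM Et Ee k' k W = (Etᵀ * W * Ee) k' k := rfl

lemma sum_exp_pos (hK : 0 < K) (Et Ee W : Matrix (Fin K) (Fin K) ℝ) (k : Fin K) :
    0 < ∑ k'' : Fin K, Real.exp ((Etᵀ * W * Ee) k'' k) := by
  have : Nonempty (Fin K) := Fin.pos_iff_nonempty.mp hK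
  exact Finset.sum_pos (fun _ _ => Real.exp_pos _) Finset.univ_nonempty

lemma ploss_eq (hK : 0 < K) (L : ℕ) (α : ℝ) (Et Ee : Matrix (Fin K) (Fin K) ℝ) :
    ploss L α Et Ee = fun W => ∑ k : Fin K, pclass K L α k *
      (Real.log (∑ k'' : Fin K, Real.exp ((Etᵀ * W * Ee) k'' k)) - (Etᵀ * W * Ee) k k) := by
  funext W
  unfold ploss prob
  rw [← Finset.sum_neg_distrib]
  refine Finset.sum_congr rfl fun k _ => ?_
  rw [Real.log_div (Real.exp_ne_zero _) (ne_of_gt (sum_exp_pos hK Et Ee W k)), Real.log_exp]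
  ring

def dCLM (L : ℕ) (α : ℝ) (Et Ee : Matrix (Fin K) (Fin K) ℝ) :
    Matrix (Fin K) (Fin K) ℝ →L[ℝ] ℝ :=
  ∑ k : Fin K, pclass K L α k •
    ((K : ℝ)⁻¹ • ∑ k'' : Fin K, aCLM Et Ee k'' k - aCLM Et Ee k k)

lemma hasFDeriv_ploss (hK : 0 < K) (L : ℕ) (α : ℝ) (Et Ee : Matrix (Fin K) (Fin K) ℝ) :
    HasFDerivAt (ploss L α Et Ee) (dCLM L α Et Ee) 0 := by
  rw [ploss_eq hK]
  unfold dCLM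
  apply HasFDerivAt.fun_sum
  intro k _
  have h1 : HasFDerivAt (fun W => ∑ k'' : Fin K, Real.exp ((Etᵀ * W * Ee) k'' k))
      (∑ k'' : Fin K, aCLM Et Ee k'' k) 0 := by
    apply HasFDerivAt.fun_sum
    intro k'' _
    have := ((aCLM Et Ee k'' k).hasFDerivAt (x := 0)).exp
    simp at this
    exact this.congr_fderiv (one_smul _ _)
  have h2 : HasFDerivAt (fun W => Real.log (∑ k'' : Fin K, Real.exp ((Etᵀ * W * Ee) k'' k)))
      ((K : ℝ)⁻¹ • ∑ k'' : Fin K, aCLM Et Ee k'' k) 0 := by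
    have h2' := h1.log (ne_of_gt (sum_exp_pos hK Et Ee (0 : Matrix (Fin K) (Fin K) ℝ) k))
    simp at h2'
    exact h2'
  have h3 := (h2.sub ((aCLM Et Ee k k).hasFDerivAt (x := 0))).const_mul (pclass K L α k)
  exact h3

/-- The gradient matrix. -/
def Mmat (K L : ℕ) (α : ℝ) : Matrix (Fin K) (Fin K) ℝ :=
  Matrix.of fun k' k => pclass K L α k * ((K : ℝ)⁻¹ - if k' = k then 1 else 0)

lemma trace_std (A : Matrix (Fin K) (Fin K) ℝ) (i j : Fin K) :
    (Aᵀ * Matrix.single i j 1).trace = A i j := by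
  simp only [Matrix.trace, Matrix.diag, Matrix.mul_apply, Matrix.single,
    Matrix.transpose_apply, Matrix.of_apply, mul_ite, mul_one, mul_zero, ite_and]
  rw [Finset.sum_comm]
  simp [Finset.sum_ite_eq, Finset.sum_ite_eq']

lemma dCLM_eq_trace (L : ℕ) (α : ℝ) (Et Ee H : Matrix (Fin K) (Fin K) ℝ) :
    dCLM L α Et Ee H = ((Et * Mmat K L α * Eeᵀ)ᵀ * H).trace := by
  have htr : ((Et * Mmat K L α * Eeᵀ)ᵀ * H).trace =
      ∑ k : Fin K, ∑ k' : Fin K, Mmat K L α k' k * (Etᵀ * H * Ee) k' k := by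
    have h0 : (Et * Mmat K L α * Eeᵀ)ᵀ * H = Ee * (Mmat K L α)ᵀ * (Etᵀ * H) := by
      simp [Matrix.transpose_mul, Matrix.mul_assoc]
    rw [h0, Matrix.trace_mul_comm, ← Matrix.mul_assoc]
    simp only [Matrix.trace, Matrix.mul_apply, Matrix.diag, Matrix.transpose_apply]
    rw [Finset.sum_comm]
    exact Finset.sum_congr rfl fun k _ => Finset.sum_congr rfl fun k' _ => mul_comm _ _
  rw [htr]
  simp only [dCLM, ContinuousLinearMap.sum_apply, ContinuousLinearMap.smul_apply,
    ContinuousLinearMap.sub_apply, aCLM_apply, smul_eq_mul]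
  refine Finset.sum_congr rfl fun k _ => ?_
  set A := Etᵀ * H * Ee with hA
  have h : ∀ k' : Fin K, Mmat K L α k' k * A k' k
      = pclass K L α k * ((K:ℝ)⁻¹ * A k' k) - pclass K L α k * (if k' = k then A k' k else 0) := by
    intro k'; by_cases h : k' = k <;> simp [Mmat, h] <;> ring
  rw [Finset.sum_congr rfl fun k' _ => h k', Finset.sum_sub_distrib, ← Finset.mul_sum,
    ← Finset.mul_sum, ← Finset.mul_sum, Finset.sum_ite_eq']
  simp; ring

lemma prob_formula (hK : 0 < K) (Et Ee Wη : Matrix (Fin K) (Fin K) ℝ) (k : Fin K) (c : ℝ)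
    (hx : ∀ k'' : Fin K, (Etᵀ * Wη * Ee) k'' k = -c * ((K:ℝ)⁻¹ - if k'' = k then 1 else 0)) :
    prob Et Ee Wη k k = Real.exp c / (Real.exp c + (K:ℝ) - 1) := by
  unfold prob
  have hnum : ∀ k'' : Fin K, Real.exp ((Etᵀ * Wη * Ee) k'' k)
      = Real.exp (-c * (K:ℝ)⁻¹) * (1 + if k'' = k then Real.exp c - 1 else 0) := by
    intro k''
    rw [hx k'']
    by_cases h : k'' = k
    · subst h
      simp only [eq_self_iff_true, if_true]
      rw [show (1:ℝ) + (Real.exp c - 1) = Real.exp c by ring, ← Real.exp_add]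
      congr 1; ring
    · simp only [h, if_neg, if_false, add_zero, mul_one]
      congr 1; ring
  rw [Finset.sum_congr rfl fun k'' _ => hnum k'', hnum k, if_pos rfl]
  rw [← Finset.mul_sum, Finset.sum_add_distrib, Finset.sum_ite_eq', if_pos (Finset.mem_univ k)]
  rw [mul_div_mul_left _ _ (Real.exp_ne_zero _)]
  simp only [Finset.sum_const, Finset.card_univ, Fintype.card_fin, nsmul_eq_mul, mul_one]
  congr 1 <;> push_cast <;> ring

end Stmt11Aux


/-- One-step gradient descent `W_η = -η ∇𝓛(W₀)`: the correct-class probability equals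
`e^{ηγ₁}/(e^{ηγ₁}+K-1)` for head classes (`k ≤ L`) and `e^{ηγ₂}/(e^{ηγ₂}+K-1)` for tail
classes (`k > L`), where `γ₁ = α/L` and `γ₂ = (1-α)/(K-L)`. -/
theorem stmt11 {K : ℕ} (hK : 2 ≤ K) (Et Ee : Matrix (Fin K) (Fin K) ℝ)
    (hEe : Eeᵀ * Ee = 1) (hEt : Etᵀ * Et = 1)
    (α β : ℝ) (hα : α ∈ Set.Ioo (0:ℝ) 1) (hβ : β ∈ Set.Ioo (0:ℝ) 1)
    (L : ℕ) (hLβ : (L : ℝ) = β * K) (hL1 : 1 ≤ L) (hLK : L ≤ K - 1)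
    (γ₁ γ₂ : ℝ) (hγ₁ : γ₁ = α / L) (hγ₂ : γ₂ = (1 - α) / ((K : ℝ) - L))
    (η : ℝ) (hη : 0 ≤ η)
    (G : Matrix (Fin K) (Fin K) ℝ) (hG : IsGradientAt (ploss L α Et Ee) G 0)
    (Wη : Matrix (Fin K) (Fin K) ℝ) (hW : Wη = -η • G) :
    (∀ k : Fin K, (k : ℕ) < L →
        prob Et Ee Wη k k = Real.exp (η * γ₁) / (Real.exp (η * γ₁) + (K : ℝ) - 1)) ∧
    (∀ k : Fin K, L ≤ (k : ℕ) →
        prob Et Ee Wη k k = Real.exp (η * γ₂) / (Real.exp (η * γ₂) + (K : ℝ) - 1)) := by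
  have hK0 : 0 < K := by omega
  obtain ⟨l, hl, hlt⟩ := hG
  have huniq : l = Stmt11Aux.dCLM L α Et Ee :=
    hl.unique (Stmt11Aux.hasFDeriv_ploss hK0 L α Et Ee)
  have hGeq : G = Et * Stmt11Aux.Mmat K L α * Eeᵀ := by
    ext i j
    have h1 := hlt (Matrix.single i j 1)
    rw [huniq, Stmt11Aux.dCLM_eq_trace, Stmt11Aux.trace_std, Stmt11Aux.trace_std] at h1
    exact h1.symm
  have hM : Etᵀ * Wη * Ee = (-η) • Stmt11Aux.Mmat K L α := by
    rw [hW, hGeq, Matrix.mul_smul, Matrix.smul_mul]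
    congr 1
    rw [Matrix.mul_assoc Et, ← Matrix.mul_assoc Etᵀ, hEt, one_mul, Matrix.mul_assoc, hEe,
      Matrix.mul_one]
  have hA : ∀ k'' k : Fin K, (Etᵀ * Wη * Ee) k'' k
      = -η * (pclass K L α k * ((K:ℝ)⁻¹ - if k'' = k then 1 else 0)) := by
    intro k'' k
    rw [hM]
    simp [Stmt11Aux.Mmat, Matrix.smul_apply, pclass]
  constructor
  · intro k hk
    have hp : pclass K L α k = γ₁ := by simp [pclass, hk, hγ₁]
    apply Stmt11Aux.prob_formula hK0
    intro k''
    rw [hA k'' k, hp]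
    ring
  · intro k hk
    have hp : pclass K L α k = γ₂ := by simp [pclass, not_lt.mpr hk, hγ₂]
    apply Stmt11Aux.prob_formula hK0
    intro k''
    rw [hA k'' k, hp]
    ring


end
end
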